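/- arXiv:1906.01613 — 5 statements merged into one kernel-verified Lean document; each statement's English description precedes it below -/
import Mathlib

section
/- On a finite connected network with a proper subset U ⊂ V, the space ℓ²₋(E⃗) decomposes as the orthogonal direct sum ⋆_U ⊕ I_U ⊕ ◇, where ⋆_U is the span of stars at vertices of U, I_U is the space of discrete gradients of functions harmonic on U, and ◇ is the cycle space. -/
open Finset

variable {V E : Type*} [Fintype V] [Fintype E] [DecidableEq V] [DecidableEq E]

/-- The elementary antisymmetric edge function `χᵉ = 1_{e} − 1_{−e}`. -/
noncomputable def chiFun (rev : E → E) (e : E) : E → ℝ :=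
  fun f => if f = e then 1 else if f = rev e then -1 else 0

/-- The star at a vertex `x`: `⋆_x = ∑_{e⁻ = x} c(e) χᵉ`. -/
noncomputable def starFun (rev : E → E) (tail : E → V) (c : E → ℝ) (x : V) : E → ℝ :=
  fun f => ∑ e ∈ univ.filter (fun e => tail e = x), c e * chiFun rev e f

/-- The inner product `(θ,φ)_r = (1/2) ∑_e θ(e) φ(e) r(e)` with `r = 1/c`. -/
noncomputable def rInner (c : E → ℝ) (θ φ : E → ℝ) : ℝ :=
  (1 / 2) * ∑ e, θ e * φ e * (c e)⁻¹

/-- The space of antisymmetric edge functions `ℓ²₋(E⃗)`. -/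
def antisymSpace (rev : E → E) : Submodule ℝ (E → ℝ) where
  carrier := {θ | ∀ e, θ (rev e) = - θ e}
  add_mem' := by
    intro a b ha hb e
    simp only [Pi.add_apply, ha e, hb e]; ring
  zero_mem' := by intro e; simp
  smul_mem' := by
    intro r a ha e
    simp only [Pi.smul_apply, ha e, smul_eq_mul]; ring

/-- The span `⋆_U` of the stars at vertices of `U`. -/
noncomputable def starSpaceOn (rev : E → E) (tail : E → V) (c : E → ℝ)
    (U : Finset V) : Submodule ℝ (E → ℝ) :=
  Submodule.span ℝ (starFun rev tail c '' ↑U)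

/-- The cycle space: span of the indicator flows of directed cycles. -/
noncomputable def cycleSpace (rev : E → E) (tail head : E → V) :
    Submodule ℝ (E → ℝ) :=
  Submodule.span ℝ
    {θ | ∃ (n : ℕ) (γ : Fin (n + 1) → E),
      (∀ i, head (γ i) = tail (γ (i + 1))) ∧ θ = ∑ i, chiFun rev (γ i)}

/-- `I_U`: the space of discrete gradients of functions discrete harmonic on `U`. -/
noncomputable def currentSpace (tail head : E → V) (c : E → ℝ) (U : Finset V) :
    Submodule ℝ (E → ℝ) :=
  Submodule.span ℝ
    {θ | ∃ h : V → ℝ,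
      (∀ x ∈ U, h x * ∑ e ∈ univ.filter (fun e => tail e = x), c e =
        ∑ e ∈ univ.filter (fun e => tail e = x), c e * h (head e)) ∧
      θ = fun e => c e * (h (head e) - h (tail e))}

/-!
Stars are gradients: `⋆_x = c · d(-1_x)`. Pairing a gradient `c · dh` with a cycle flow `χ^γ`
gives the telescoping sum `∑ᵢ (h(γᵢ⁺) - h(γᵢ⁻)) = 0`, and pairing `⋆_x` with `c · dh` gives
`∑_{e⁻ = x} c(e) (h(e⁺) - h(x))`, which vanishes exactly when `h` is harmonic at `x`.
For completeness, an antisymmetric `θ` orthogonal to `⋆_U ⊕ I_U ⊕ ◇` makes `θ / c` sum to zero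
along every closed walk, so on the connected graph `θ / c = dh` for the potential `h(y)` obtained
by summing `θ / c` along any walk from a base point to `y`. Orthogonality to the stars at `U`
then says that `h` is harmonic on `U`, so `θ ∈ I_U`, and `θ ⊥ θ` forces `θ = 0`.
-/

set_option linter.unusedSectionVars false

variable {rev : E → E} {tail head : E → V} {c : E → ℝ}

noncomputable def rForm (c : E → ℝ) : LinearMap.BilinForm ℝ (E → ℝ) :=
  LinearMap.mk₂ ℝ (rInner c)
    (fun _ _ _ => by simp only [rInner, Pi.add_apply, add_mul, sum_add_distrib, mul_add])
    (fun _ _ _ => by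
      simp only [rInner, Pi.smul_apply, smul_eq_mul, mul_sum, mul_assoc, mul_left_comm])
    (fun _ _ _ => by simp only [rInner, Pi.add_apply, add_mul, mul_add, sum_add_distrib])
    (fun _ _ _ => by
      simp only [rInner, Pi.smul_apply, smul_eq_mul, mul_sum, mul_assoc, mul_left_comm])

lemma rForm_apply (θ φ : E → ℝ) : rForm c θ φ = rInner c θ φ := rfl

lemma rInner_comm (θ φ : E → ℝ) : rInner c θ φ = rInner c φ θ := by
  simp only [rInner, mul_comm (θ _)]

lemma eq_zero_of_rInner_self_eq_zero (hc : ∀ e, 0 < c e) {θ : E → ℝ}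
    (h : rInner c θ θ = 0) : θ = 0 := by
  have hterm : ∀ e, θ e * θ e * (c e)⁻¹ = 0 := by
    have hnonneg : ∀ e ∈ univ, 0 ≤ θ e * θ e * (c e)⁻¹ := fun e _ =>
      mul_nonneg (mul_self_nonneg _) (inv_nonneg.mpr (hc e).le)
    simpa using (sum_eq_zero_iff_of_nonneg hnonneg).mp (by simpa [rInner] using h)
  funext e
  simpa [(hc e).ne'] using hterm e

lemma rInner_eq_zero_of_mem_span {s t : Set (E → ℝ)}
    (h : ∀ a ∈ s, ∀ b ∈ t, rInner c a b = 0) {θ φ : E → ℝ}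
    (hθ : θ ∈ Submodule.span ℝ s) (hφ : φ ∈ Submodule.span ℝ t) : rInner c θ φ = 0 := by
  induction hθ, hφ using Submodule.span_induction₂ with
  | mem_mem a b ha hb => exact h a ha b hb
  | _ => simp_all [← rForm_apply]

lemma chiFun_eq (hrevne : ∀ e, rev e ≠ e) (e : E) :
    chiFun rev e = Pi.single e 1 - Pi.single (rev e) 1 := by
  funext f
  by_cases hfe : f = e
  · subst hfe
    simp [chiFun, hrevne f |>.symm]
  · simp [chiFun, Pi.single_apply, hfe, apply_ite]

lemma chiFun_mem_antisymSpace (hrev : Function.Involutive rev) (hrevne : ∀ e, rev e ≠ e)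
    (e : E) : chiFun rev e ∈ antisymSpace rev := by
  intro f
  simp only [chiFun_eq hrevne, Pi.sub_apply, Pi.single_apply, hrev.eq_iff,
    hrev e, neg_sub]

lemma rInner_chiFun (hrevne : ∀ e, rev e ≠ e) (hcrev : ∀ e, c (rev e) = c e)
    {φ : E → ℝ} (hφ : φ ∈ antisymSpace rev) (e : E) :
    rInner c φ (chiFun rev e) = φ e / c e := by
  simp only [rInner, chiFun_eq hrevne, Pi.sub_apply, mul_sub, sub_mul, sum_sub_distrib,
    Pi.single_apply, mul_ite, mul_one, mul_zero, ite_mul, zero_mul, sum_ite_eq', mem_univ,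
    if_true, hφ e, hcrev]
  ring

def gradFun (tail head : E → V) (c : E → ℝ) (h : V → ℝ) : E → ℝ :=
  fun e => c e * (h (head e) - h (tail e))

def IsHarmonicAt (tail head : E → V) (c : E → ℝ) (h : V → ℝ) (x : V) : Prop :=
  h x * ∑ e ∈ univ.filter (fun e => tail e = x), c e =
    ∑ e ∈ univ.filter (fun e => tail e = x), c e * h (head e)

lemma gradFun_mem_antisymSpace (hrev : Function.Involutive rev)
    (htail_rev : ∀ e, tail (rev e) = head e) (hcrev : ∀ e, c (rev e) = c e) (h : V → ℝ) :
    gradFun tail head c h ∈ antisymSpace rev := by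
  intro e
  have hhead_rev : head (rev e) = tail e := by rw [← htail_rev, hrev]
  simp only [gradFun, htail_rev, hhead_rev, hcrev]
  ring

lemma starFun_eq_gradFun (hrev : Function.Involutive rev) (hrevne : ∀ e, rev e ≠ e)
    (htail_rev : ∀ e, tail (rev e) = head e) (hcrev : ∀ e, c (rev e) = c e) (x : V) :
    starFun rev tail c x = gradFun tail head c (Pi.single x (-1)) := by
  funext f
  simp only [starFun, gradFun, chiFun_eq hrevne, Pi.sub_apply, Pi.single_apply, mul_sub,
    mul_ite, mul_one, mul_zero, sum_sub_distrib, @eq_comm _ f, hrev.eq_iff, sum_ite_eq',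
    mem_filter, mem_univ, true_and, htail_rev, hcrev]
  split_ifs <;> ring

lemma rInner_starFun (hrevne : ∀ e, rev e ≠ e) (hc : ∀ e, 0 < c e)
    (hcrev : ∀ e, c (rev e) = c e) {φ : E → ℝ} (hφ : φ ∈ antisymSpace rev) (x : V) :
    rInner c (starFun rev tail c x) φ = ∑ e ∈ univ.filter (fun e => tail e = x), φ e := by
  have hstar : starFun rev tail c x =
      ∑ e ∈ univ.filter (fun e => tail e = x), c e • chiFun rev e := by
    funext f
    simp [starFun, Finset.sum_apply]
  rw [rInner_comm, hstar, ← rForm_apply, map_sum]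
  refine sum_congr rfl fun e _ => ?_
  rw [map_smul, rForm_apply, rInner_chiFun hrevne hcrev hφ, smul_eq_mul,
    mul_div_cancel₀ _ (hc e).ne']

lemma rInner_starFun_gradFun_eq_zero_iff (hrev : Function.Involutive rev)
    (hrevne : ∀ e, rev e ≠ e) (htail_rev : ∀ e, tail (rev e) = head e) (hc : ∀ e, 0 < c e)
    (hcrev : ∀ e, c (rev e) = c e) (h : V → ℝ) (x : V) :
    rInner c (starFun rev tail c x) (gradFun tail head c h) = 0 ↔
      IsHarmonicAt tail head c h x := by
  have hterm : ∀ e ∈ univ.filter (fun e => tail e = x),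
      gradFun tail head c h e = c e * h (head e) - h x * c e := fun e he => by
    rw [gradFun, (mem_filter.mp he).2]
    ring
  rw [rInner_starFun hrevne hc hcrev (gradFun_mem_antisymSpace hrev htail_rev hcrev h),
    sum_congr rfl hterm, sum_sub_distrib, ← mul_sum, sub_eq_zero, IsHarmonicAt, eq_comm]

def IsCycle (tail head : E → V) {n : ℕ} (γ : Fin (n + 1) → E) : Prop :=
  ∀ i, head (γ i) = tail (γ (i + 1))

lemma IsCycle.sum_sub_eq_zero {n : ℕ} {γ : Fin (n + 1) → E} (hγ : IsCycle tail head γ)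
    (h : V → ℝ) : ∑ i, (h (head (γ i)) - h (tail (γ i))) = 0 := by
  rw [sum_sub_distrib, sub_eq_zero]
  exact Fintype.sum_equiv (Equiv.addRight 1) _ _ fun i => congrArg h (hγ i)

lemma sum_chiFun_mem_antisymSpace (hrev : Function.Involutive rev)
    (hrevne : ∀ e, rev e ≠ e) {n : ℕ} (γ : Fin (n + 1) → E) :
    ∑ i, chiFun rev (γ i) ∈ antisymSpace rev :=
  Submodule.sum_mem _ fun i _ => chiFun_mem_antisymSpace hrev hrevne (γ i)

lemma rInner_sum_chiFun (hrevne : ∀ e, rev e ≠ e) (hcrev : ∀ e, c (rev e) = c e)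
    {φ : E → ℝ} (hφ : φ ∈ antisymSpace rev) {n : ℕ} (γ : Fin (n + 1) → E) :
    rInner c φ (∑ i, chiFun rev (γ i)) = ∑ i, φ (γ i) / c (γ i) := by
  rw [← rForm_apply, map_sum]
  exact sum_congr rfl fun i _ => rInner_chiFun hrevne hcrev hφ (γ i)

lemma rInner_gradFun_sum_chiFun (hrev : Function.Involutive rev) (hrevne : ∀ e, rev e ≠ e)
    (htail_rev : ∀ e, tail (rev e) = head e) (hc : ∀ e, 0 < c e)
    (hcrev : ∀ e, c (rev e) = c e) (h : V → ℝ) {n : ℕ} {γ : Fin (n + 1) → E}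
    (hγ : IsCycle tail head γ) :
    rInner c (gradFun tail head c h) (∑ i, chiFun rev (γ i)) = 0 := by
  rw [rInner_sum_chiFun hrevne hcrev (gradFun_mem_antisymSpace hrev htail_rev hcrev h)]
  simpa only [gradFun, mul_div_cancel_left₀ _ (hc _).ne'] using hγ.sum_sub_eq_zero h

lemma starSpaceOn_orthogonal_currentSpace (hrev : Function.Involutive rev)
    (hrevne : ∀ e, rev e ≠ e) (htail_rev : ∀ e, tail (rev e) = head e) (hc : ∀ e, 0 < c e)
    (hcrev : ∀ e, c (rev e) = c e) (U : Finset V) :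
    ∀ θ ∈ starSpaceOn rev tail c U, ∀ φ ∈ currentSpace tail head c U, rInner c θ φ = 0 := by
  refine fun θ hθ φ hφ => rInner_eq_zero_of_mem_span ?_ hθ hφ
  rintro _ ⟨x, hx, rfl⟩ _ ⟨h, hharm, rfl⟩
  exact (rInner_starFun_gradFun_eq_zero_iff hrev hrevne htail_rev hc hcrev h x).mpr
    (hharm x hx)

lemma currentSpace_orthogonal_cycleSpace (hrev : Function.Involutive rev)
    (hrevne : ∀ e, rev e ≠ e) (htail_rev : ∀ e, tail (rev e) = head e) (hc : ∀ e, 0 < c e)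
    (hcrev : ∀ e, c (rev e) = c e) (U : Finset V) :
    ∀ θ ∈ currentSpace tail head c U, ∀ φ ∈ cycleSpace rev tail head, rInner c θ φ = 0 := by
  refine fun θ hθ φ hφ => rInner_eq_zero_of_mem_span ?_ hθ hφ
  rintro _ ⟨h, -, rfl⟩ _ ⟨n, γ, hγ, rfl⟩
  exact rInner_gradFun_sum_chiFun hrev hrevne htail_rev hc hcrev h hγ

lemma starSpaceOn_orthogonal_cycleSpace (hrev : Function.Involutive rev)
    (hrevne : ∀ e, rev e ≠ e) (htail_rev : ∀ e, tail (rev e) = head e) (hc : ∀ e, 0 < c e)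
    (hcrev : ∀ e, c (rev e) = c e) (U : Finset V) :
    ∀ θ ∈ starSpaceOn rev tail c U, ∀ φ ∈ cycleSpace rev tail head, rInner c θ φ = 0 := by
  refine fun θ hθ φ hφ => rInner_eq_zero_of_mem_span ?_ hθ hφ
  rintro _ ⟨x, -, rfl⟩ _ ⟨n, γ, hγ, rfl⟩
  rw [starFun_eq_gradFun hrev hrevne htail_rev hcrev]
  exact rInner_gradFun_sum_chiFun hrev hrevne htail_rev hc hcrev _ hγ

def IsStronglyConnected (tail head : E → V) : Prop :=
  ∀ x y : V, Relation.ReflTransGen (fun a b => ∃ e, tail e = a ∧ head e = b) x y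

def IsWalk (tail head : E → V) : V → V → List E → Prop
  | x, y, [] => x = y
  | x, y, e :: l => tail e = x ∧ IsWalk tail head (head e) y l

namespace IsWalk

lemma append {x y z : V} {l m : List E} (hl : IsWalk tail head x y l)
    (hm : IsWalk tail head y z m) : IsWalk tail head x z (l ++ m) := by
  induction l generalizing x with
  | nil => exact hl ▸ hm
  | cons e l ih => exact ⟨hl.1, ih hl.2⟩

lemma tail_getElem_zero {x y : V} {l : List E} (hl : IsWalk tail head x y l)
    (h : 0 < l.length) : tail l[0] = x := by
  cases l with
  | nil => simp at h
  | cons e l => exact hl.1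

lemma head_getElem {x y : V} {l : List E} (hl : IsWalk tail head x y l) (i : ℕ)
    (hi : i < l.length) : head l[i] = if h : i + 1 < l.length then tail l[i + 1] else y := by
  induction l generalizing x i with
  | nil => simp at hi
  | cons e l ih =>
    cases i with
    | zero =>
      cases l with
      | nil => exact hl.2
      | cons f l => exact (hl.2.tail_getElem_zero (by simp)).symm.trans (by simp)
    | succ i => simpa using ih hl.2 i (by simpa using hi)

lemma isCycle {x : V} {l : List E} {n : ℕ} (hl : IsWalk tail head x x l)
    (hlen : l.length = n + 1) :
    IsCycle tail head (fun i : Fin (n + 1) => l[(i : ℕ)]'(i.isLt.trans_eq hlen.symm)) := by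
  intro i
  simp only [hl.head_getElem, Fin.val_add_one, hlen]
  split_ifs with hnext hlast hlast
  · simp [hlast] at hnext
  · rfl
  · exact (hl.tail_getElem_zero _).symm
  · exact absurd (Fin.val_lt_last hlast) (by omega)

lemma sum_map_eq_zero_of_closed {φ : E → ℝ}
    (hcyc : ∀ (n : ℕ) (γ : Fin (n + 1) → E), IsCycle tail head γ → ∑ i, φ (γ i) = 0)
    {x : V} {l : List E} (hl : IsWalk tail head x x l) : (l.map φ).sum = 0 := by
  cases l with
  | nil => rfl
  | cons e m =>
    rw [← Fin.sum_univ_fun_getElem]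
    exact hcyc m.length _ (hl.isCycle rfl)

end IsWalk

lemma exists_isWalk (hconn : IsStronglyConnected tail head) (x y : V) :
    ∃ l, IsWalk tail head x y l := by
  induction hconn x y using Relation.ReflTransGen.head_induction_on with
  | refl => exact ⟨[], rfl⟩
  | head hstep _ ih =>
    obtain ⟨e, rfl, rfl⟩ := hstep
    obtain ⟨l, hl⟩ := ih
    exact ⟨e :: l, rfl, hl⟩

lemma IsWalk.sum_map_eq {φ : E → ℝ} (hconn : IsStronglyConnected tail head)
    (hcyc : ∀ (n : ℕ) (γ : Fin (n + 1) → E), IsCycle tail head γ → ∑ i, φ (γ i) = 0)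
    {x y : V} {p q : List E} (hp : IsWalk tail head x y p) (hq : IsWalk tail head x y q) :
    (p.map φ).sum = (q.map φ).sum := by
  obtain ⟨r, hr⟩ := exists_isWalk hconn y x
  have hpr := (hp.append hr).sum_map_eq_zero_of_closed hcyc
  have hqr := (hq.append hr).sum_map_eq_zero_of_closed hcyc
  rw [List.map_append, List.sum_append] at hpr hqr
  linarith

lemma exists_potential {φ : E → ℝ} (hconn : IsStronglyConnected tail head)
    (hcyc : ∀ (n : ℕ) (γ : Fin (n + 1) → E), IsCycle tail head γ → ∑ i, φ (γ i) = 0) :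
    ∃ h : V → ℝ, ∀ e, φ e = h (head e) - h (tail e) := by
  rcases isEmpty_or_nonempty V with hV | ⟨⟨x₀⟩⟩
  · exact ⟨0, fun e => hV.elim (tail e)⟩
  choose p hp using exists_isWalk hconn x₀
  refine ⟨fun y => ((p y).map φ).sum, fun e => ?_⟩
  have hpe := (hp (tail e)).append (show IsWalk tail head (tail e) (head e) [e] from ⟨rfl, rfl⟩)
  dsimp only
  rw [(hp (head e)).sum_map_eq hconn hcyc hpe, List.map_append, List.sum_append]
  simp

lemma starSpaceOn_le_antisymSpace (hrev : Function.Involutive rev) (hrevne : ∀ e, rev e ≠ e)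
    (htail_rev : ∀ e, tail (rev e) = head e) (hcrev : ∀ e, c (rev e) = c e) (U : Finset V) :
    starSpaceOn rev tail c U ≤ antisymSpace rev :=
  Submodule.span_le.mpr <| by
    rintro _ ⟨x, -, rfl⟩
    rw [starFun_eq_gradFun hrev hrevne htail_rev hcrev]
    exact gradFun_mem_antisymSpace hrev htail_rev hcrev _

lemma currentSpace_le_antisymSpace (hrev : Function.Involutive rev)
    (htail_rev : ∀ e, tail (rev e) = head e) (hcrev : ∀ e, c (rev e) = c e) (U : Finset V) :
    currentSpace tail head c U ≤ antisymSpace rev :=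
  Submodule.span_le.mpr <| by
    rintro _ ⟨h, -, rfl⟩
    exact gradFun_mem_antisymSpace hrev htail_rev hcrev h

lemma cycleSpace_le_antisymSpace (hrev : Function.Involutive rev) (hrevne : ∀ e, rev e ≠ e) :
    cycleSpace rev tail head ≤ antisymSpace rev :=
  Submodule.span_le.mpr <| by
    rintro _ ⟨n, γ, -, rfl⟩
    exact sum_chiFun_mem_antisymSpace hrev hrevne γ

lemma mem_currentSpace_of_orthogonal (hrev : Function.Involutive rev)
    (hrevne : ∀ e, rev e ≠ e) (htail_rev : ∀ e, tail (rev e) = head e) (hc : ∀ e, 0 < c e)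
    (hcrev : ∀ e, c (rev e) = c e) (hconn : IsStronglyConnected tail head)
    (U : Finset V) {θ : E → ℝ} (hθ : θ ∈ antisymSpace rev)
    (hstar : ∀ x ∈ U, rInner c (starFun rev tail c x) θ = 0)
    (hcyc : ∀ (n : ℕ) (γ : Fin (n + 1) → E), IsCycle tail head γ →
      rInner c θ (∑ i, chiFun rev (γ i)) = 0) :
    θ ∈ currentSpace tail head c U := by
  obtain ⟨h, hh⟩ := exists_potential (φ := fun e => θ e / c e) hconn fun n γ hγ => by
    rw [← rInner_sum_chiFun hrevne hcrev hθ]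
    exact hcyc n γ hγ
  have hgrad : θ = gradFun tail head c h := funext fun e => by
    rw [gradFun, ← hh e, mul_div_cancel₀ _ (hc e).ne']
  refine Submodule.subset_span ⟨h, fun x hx => ?_, hgrad⟩
  exact (rInner_starFun_gradFun_eq_zero_iff hrev hrevne htail_rev hc hcrev h x).mp
    (hgrad ▸ hstar x hx)

lemma le_of_orthogonal_mem (hc : ∀ e, 0 < c e) {S A : Submodule ℝ (E → ℝ)} (hSA : S ≤ A)
    (h : ∀ θ ∈ A, (∀ s ∈ S, rInner c s θ = 0) → θ ∈ S) : A ≤ S := by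
  have hrefl : (rForm c).IsRefl := fun θ φ hθφ => by rwa [rForm_apply, rInner_comm]
  have hcompl : IsCompl S ((rForm c).orthogonal S) :=
    (LinearMap.BilinForm.isCompl_orthogonal_iff_disjoint hrefl).mpr <|
      Submodule.disjoint_def.mpr fun θ hθS hθ => eq_zero_of_rInner_self_eq_zero hc (hθ θ hθS)
  intro θ hθA
  obtain ⟨s, hs, t, ht, rfl⟩ := Submodule.mem_sup.mp (hcompl.sup_eq_top ▸ Submodule.mem_top :
    θ ∈ S ⊔ (rForm c).orthogonal S)
  have htA : t ∈ A := by simpa using A.sub_mem hθA (hSA hs)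
  have ht0 : t = 0 := eq_zero_of_rInner_self_eq_zero hc (ht t (h t htA ht))
  simpa [ht0] using hs

theorem stmt_3_general
    (rev : E → E) (hrev : ∀ e, rev (rev e) = e) (hrevne : ∀ e, rev e ≠ e)
    (tail head : E → V) (htail_rev : ∀ e, tail (rev e) = head e)
    (c : E → ℝ) (hc : ∀ e, 0 < c e) (hcrev : ∀ e, c (rev e) = c e)
    (hconn : ∀ x y : V,
      Relation.ReflTransGen (fun a b => ∃ e, tail e = a ∧ head e = b) x y)
    (U : Finset V) :
    (∀ θ ∈ starSpaceOn rev tail c U, ∀ φ ∈ currentSpace tail head c U,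
        rInner c θ φ = 0) ∧
    (∀ θ ∈ starSpaceOn rev tail c U, ∀ φ ∈ cycleSpace rev tail head,
        rInner c θ φ = 0) ∧
    (∀ θ ∈ currentSpace tail head c U, ∀ φ ∈ cycleSpace rev tail head,
        rInner c θ φ = 0) ∧
      starSpaceOn rev tail c U ⊔ currentSpace tail head c U ⊔
        cycleSpace rev tail head = antisymSpace rev := by
  have hle : starSpaceOn rev tail c U ⊔ currentSpace tail head c U ⊔
      cycleSpace rev tail head ≤ antisymSpace rev :=
    sup_le (sup_le (starSpaceOn_le_antisymSpace hrev hrevne htail_rev hcrev U)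
      (currentSpace_le_antisymSpace hrev htail_rev hcrev U))
      (cycleSpace_le_antisymSpace hrev hrevne)
  refine ⟨starSpaceOn_orthogonal_currentSpace hrev hrevne htail_rev hc hcrev U,
    starSpaceOn_orthogonal_cycleSpace hrev hrevne htail_rev hc hcrev U,
    currentSpace_orthogonal_cycleSpace hrev hrevne htail_rev hc hcrev U,
    le_antisymm hle (le_of_orthogonal_mem hc hle fun θ hθ hperp => ?_)⟩
  refine Submodule.mem_sup_left (Submodule.mem_sup_right ?_)
  refine mem_currentSpace_of_orthogonal hrev hrevne htail_rev hc hcrev hconn U hθ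
    (fun x hx => hperp _ ?_) (fun n γ hγ => (rInner_comm _ _).trans (hperp _ ?_))
  · exact Submodule.mem_sup_left (Submodule.mem_sup_left (Submodule.subset_span ⟨x, hx, rfl⟩))
  · exact Submodule.mem_sup_right (Submodule.subset_span ⟨n, γ, hγ, rfl⟩)

/-- On a finite connected network with a proper subset `U ⊂ V`,
`ℓ²₋(E⃗) = ⋆_U ⊕ I_U ⊕ ◇`, an orthogonal direct sum. -/
theorem stmt_3
    (rev : E → E) (hrev : ∀ e, rev (rev e) = e) (hrevne : ∀ e, rev e ≠ e)
    (tail head : E → V) (htail_rev : ∀ e, tail (rev e) = head e)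
    (c : E → ℝ) (hc : ∀ e, 0 < c e) (hcrev : ∀ e, c (rev e) = c e)
    (hconn : ∀ x y : V,
      Relation.ReflTransGen (fun a b => ∃ e, tail e = a ∧ head e = b) x y)
    (U : Finset V) (hU : U ≠ univ) :
    (∀ θ ∈ starSpaceOn rev tail c U, ∀ φ ∈ currentSpace tail head c U,
        rInner c θ φ = 0) ∧
    (∀ θ ∈ starSpaceOn rev tail c U, ∀ φ ∈ cycleSpace rev tail head,
        rInner c θ φ = 0) ∧
    (∀ θ ∈ currentSpace tail head c U, ∀ φ ∈ cycleSpace rev tail head,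
        rInner c θ φ = 0) ∧
      starSpaceOn rev tail c U ⊔ currentSpace tail head c U ⊔
        cycleSpace rev tail head = antisymSpace rev :=
  stmt_3_general rev hrev hrevne tail head htail_rev c hc hcrev hconn U
end

section
/- On a finite connected network with a proper subset U ⊂ V, let f : V → ℝ and θ = c df. Then the orthogonal projection Π_U θ of θ onto the space I_U of current flows equals c dh, where h is the unique function equal to f on V∖U and discrete harmonic on U. Consequently the Dirichlet energy satisfies ℰ(h) ≤ ℰ(f). -/
/-!
By the maximum principle a function harmonic on `U ≠ V` and vanishing off `U` is zero; this
gives uniqueness of the harmonic extension `h`, and existence because the Dirichlet problem is a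
square linear system in the values on `U`. Green's identity
`∑ c du dv = -2 ∑ u Δv` (summing over both orientations of each edge) shows that the current of
a potential vanishing off `U`, such as `f - h`, is orthogonal to every current in `I_U`. Hence
`c dh` is the projection of `c df`, and Pythagoras gives `ℰ(h) ≤ ℰ(f)`.
-/

open Finset

variable {V E : Type*} [Fintype V] [Fintype E] [DecidableEq V] [DecidableEq E]

/-- The Dirichlet energy of a vertex function. -/
noncomputable def energyV (tail head : E → V) (c : E → ℝ) (f : V → ℝ) : ℝ :=
  (1 / 2) * ∑ e, c e * (f (head e) - f (tail e)) ^ 2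

namespace Network

omit [Fintype V] [DecidableEq E]

variable (tail head : E → V) (c : E → ℝ)

section Current

omit [Fintype E] [DecidableEq V]

/-- `c dg`, the current induced by the potential `g`. -/
def current (g : V → ℝ) : E → ℝ := fun e => c e * (g (head e) - g (tail e))

lemma current_sub (u v : V → ℝ) :
    current tail head c (u - v) = current tail head c u - current tail head c v := by
  ext e
  simp only [current, Pi.sub_apply]
  ring

end Current

section Energy

omit [DecidableEq V]

noncomputable def rInnerRight (θ : E → ℝ) : (E → ℝ) →ₗ[ℝ] ℝ where
  toFun := rInner c θ
  map_add' φ ψ := by simp only [rInner, Pi.add_apply, mul_add, add_mul, sum_add_distrib]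
  map_smul' a ψ := by
    simp only [rInner, Pi.smul_apply, smul_eq_mul, RingHom.id_apply, mul_sum]
    exact sum_congr rfl fun e _ => by ring

variable {tail head c}

lemma rInner_current_current (hc : ∀ e, c e ≠ 0) (u v : V → ℝ) :
    rInner c (current tail head c u) (current tail head c v) =
      (1 / 2) * ∑ e, c e * (u (head e) - u (tail e)) * (v (head e) - v (tail e)) := by
  simp only [rInner, current]
  congr 1
  refine sum_congr rfl fun e _ => ?_
  field_simp [hc e]

lemma energyV_eq_rInner (hc : ∀ e, c e ≠ 0) (u : V → ℝ) :
    energyV tail head c u = rInner c (current tail head c u) (current tail head c u) := by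
  rw [rInner_current_current hc, energyV]
  simp only [mul_assoc, sq]

lemma rInner_self_le_of_rInner_sub_eq_zero (hc : ∀ e, 0 ≤ c e) {θ φ : E → ℝ}
    (horth : rInner c (θ - φ) φ = 0) : rInner c φ φ ≤ rInner c θ θ := by
  have hexpand : rInner c θ θ =
      rInner c (θ - φ) (θ - φ) + 2 * rInner c (θ - φ) φ + rInner c φ φ := by
    simp only [rInner, Pi.sub_apply, mul_sum, ← sum_add_distrib]
    exact sum_congr rfl fun e _ => by ring
  have hnonneg : 0 ≤ rInner c (θ - φ) (θ - φ) :=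
    mul_nonneg (by norm_num) <| sum_nonneg fun e _ =>
      mul_nonneg (mul_self_nonneg _) (inv_nonneg.2 (hc e))
  linarith

end Energy

def IsHarmonicOn (U : Finset V) (g : V → ℝ) : Prop :=
  ∀ x ∈ U, g x * ∑ e ∈ univ.filter (fun e => tail e = x), c e =
    ∑ e ∈ univ.filter (fun e => tail e = x), c e * g (head e)

def laplacian : (V → ℝ) →ₗ[ℝ] V → ℝ where
  toFun g x := ∑ e ∈ univ.filter (fun e => tail e = x), c e * (g (head e) - g x)
  map_add' g g' := by
    ext x
    simp only [Pi.add_apply, ← sum_add_distrib]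
    exact sum_congr rfl fun e _ => by ring
  map_smul' a g := by
    ext x
    simp only [Pi.smul_apply, smul_eq_mul, RingHom.id_apply, mul_sum]
    exact sum_congr rfl fun e _ => by ring

lemma laplacian_apply (g : V → ℝ) (x : V) :
    laplacian tail head c g x =
      ∑ e ∈ univ.filter (fun e => tail e = x), c e * (g (head e) - g x) :=
  rfl

variable {tail head c}

lemma isHarmonicOn_iff {U : Finset V} {g : V → ℝ} :
    IsHarmonicOn tail head c U g ↔ ∀ x ∈ U, laplacian tail head c g x = 0 := by
  refine forall₂_congr fun x _ => ?_
  simp only [laplacian_apply, mul_sub, sum_sub_distrib, ← sum_mul]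
  constructor <;> intro h <;> linarith

lemma IsHarmonicOn.sub {U : Finset V} {g k : V → ℝ} (hg : IsHarmonicOn tail head c U g)
    (hk : IsHarmonicOn tail head c U k) : IsHarmonicOn tail head c U (g - k) := by
  rw [isHarmonicOn_iff] at *
  intro x hx
  simp [hg x hx, hk x hx]

lemma IsHarmonicOn.neg {U : Finset V} {g : V → ℝ} (hg : IsHarmonicOn tail head c U g) :
    IsHarmonicOn tail head c U (-g) := by
  rw [isHarmonicOn_iff] at *
  intro x hx
  simp [hg x hx]

/-- Each term of the Laplacian is nonpositive at a global maximum, so all of them vanish. -/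
lemma apply_head_eq_of_laplacian_eq_zero (hc : ∀ e, 0 < c e) {g : V → ℝ} {x : V}
    (hmax : ∀ y, g y ≤ g x) (hΔ : laplacian tail head c g x = 0) {e : E} (he : tail e = x) :
    g (head e) = g x := by
  have hterm : ∀ e' ∈ univ.filter (fun e' => tail e' = x), c e' * (g (head e') - g x) ≤ 0 :=
    fun e' _ => mul_nonpos_of_nonneg_of_nonpos (hc e').le (sub_nonpos.2 (hmax _))
  rw [laplacian_apply] at hΔ
  have := (sum_eq_zero_iff_of_nonpos hterm).1 hΔ e (by simp [he])
  have := (mul_eq_zero.1 this).resolve_left (hc e).ne'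
  linarith

variable [Fintype V]

/-- Green's identity: reversing the edges turns the sum over heads into minus the sum over
tails, which regroups into the Laplacian at the tail vertex. -/
lemma sum_mul_grad_mul_grad {rev : E → E} (hrev : Function.Involutive rev)
    (htail_rev : ∀ e, tail (rev e) = head e) (hcrev : ∀ e, c (rev e) = c e) (u v : V → ℝ) :
    ∑ e, c e * (u (head e) - u (tail e)) * (v (head e) - v (tail e)) =
      -2 * ∑ x, u x * laplacian tail head c v x := by
  have hhead_rev : ∀ e, head (rev e) = tail e := fun e => by rw [← htail_rev, hrev]
  have hheads : ∑ e, c e * u (head e) * (v (head e) - v (tail e)) =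
      -∑ e, c e * u (tail e) * (v (head e) - v (tail e)) := by
    rw [← Equiv.sum_comp (hrev.toPerm rev), ← sum_neg_distrib]
    refine sum_congr rfl fun e _ => ?_
    simp only [Function.Involutive.coe_toPerm, hcrev, hhead_rev, htail_rev]
    ring
  have htails : ∑ e, c e * u (tail e) * (v (head e) - v (tail e)) =
      ∑ x, u x * laplacian tail head c v x := by
    rw [← sum_fiberwise univ tail]
    refine sum_congr rfl fun x _ => ?_
    rw [laplacian_apply, mul_sum]
    refine sum_congr rfl fun e he => ?_
    rw [(mem_filter.1 he).2]
    ring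
  calc ∑ e, c e * (u (head e) - u (tail e)) * (v (head e) - v (tail e))
      = ∑ e, c e * u (head e) * (v (head e) - v (tail e)) -
          ∑ e, c e * u (tail e) * (v (head e) - v (tail e)) := by
        rw [← sum_sub_distrib]
        exact sum_congr rfl fun e _ => by ring
    _ = -2 * ∑ x, u x * laplacian tail head c v x := by
        rw [hheads, htails]
        ring

lemma rInner_current_eq_zero_of_mem_currentSpace (hc : ∀ e, c e ≠ 0) {rev : E → E}
    (hrev : Function.Involutive rev) (htail_rev : ∀ e, tail (rev e) = head e)
    (hcrev : ∀ e, c (rev e) = c e) {U : Finset V} {u : V → ℝ} (hu : ∀ x ∉ U, u x = 0)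
    {ψ : E → ℝ} (hψ : ψ ∈ currentSpace tail head c U) :
    rInner c (current tail head c u) ψ = 0 := by
  suffices currentSpace tail head c U ≤ LinearMap.ker (rInnerRight c (current tail head c u)) from
    this hψ
  refine Submodule.span_le.2 ?_
  rintro _ ⟨k, hk, rfl⟩
  change rInner c (current tail head c u) (current tail head c k) = 0
  rw [rInner_current_current hc, sum_mul_grad_mul_grad hrev htail_rev hcrev]
  refine mul_eq_zero_of_right _ (mul_eq_zero_of_right _ (sum_eq_zero fun x _ => ?_))
  by_cases hx : x ∈ U
  · rw [isHarmonicOn_iff.1 hk x hx, mul_zero]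
  · rw [hu x hx, zero_mul]

/-- Maximum principle: a positive maximum would propagate along a path to a vertex outside `U`. -/
lemma nonpos_of_isHarmonicOn (hc : ∀ e, 0 < c e)
    (hconn : ∀ x y : V, Relation.ReflTransGen (fun a b => ∃ e, tail e = a ∧ head e = b) x y)
    {U : Finset V} (hU : U ≠ univ) {g : V → ℝ} (hg : IsHarmonicOn tail head c U g)
    (hout : ∀ x ∉ U, g x ≤ 0) (x : V) : g x ≤ 0 := by
  obtain ⟨y, hy⟩ : ∃ y, y ∉ U := by simpa [eq_univ_iff_forall] using hU
  obtain ⟨x₀, -, hx₀⟩ := exists_max_image univ g ⟨y, mem_univ y⟩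
  by_contra! hpos
  have hmax_pos : 0 < g x₀ := hpos.trans_le (hx₀ x (mem_univ x))
  have hconst : ∀ z, g z = g x₀ := fun z => by
    induction hconn x₀ z with
    | refl => rfl
    | tail _ hstep ih =>
      obtain ⟨e, rfl, rfl⟩ := hstep
      have hmem : tail e ∈ U := by
        by_contra h
        linarith [hout _ h]
      rw [← ih] at hx₀ ⊢
      exact apply_head_eq_of_laplacian_eq_zero hc (fun w => hx₀ w (mem_univ w))
        (isHarmonicOn_iff.1 hg _ hmem) rfl
  linarith [hout y hy, hconst y]

lemma eq_zero_of_isHarmonicOn (hc : ∀ e, 0 < c e)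
    (hconn : ∀ x y : V, Relation.ReflTransGen (fun a b => ∃ e, tail e = a ∧ head e = b) x y)
    {U : Finset V} (hU : U ≠ univ) {g : V → ℝ} (hg : IsHarmonicOn tail head c U g)
    (hout : ∀ x ∉ U, g x = 0) : g = 0 := by
  funext x
  refine le_antisymm (nonpos_of_isHarmonicOn hc hconn hU hg (fun x hx => (hout x hx).le) x) ?_
  simpa using nonpos_of_isHarmonicOn hc hconn hU hg.neg (fun x hx => by simp [hout x hx]) x

lemma exists_isHarmonicOn_eq_off (hc : ∀ e, 0 < c e)
    (hconn : ∀ x y : V, Relation.ReflTransGen (fun a b => ∃ e, tail e = a ∧ head e = b) x y)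
    {U : Finset V} (hU : U ≠ univ) (f : V → ℝ) :
    ∃ h : V → ℝ, (∀ x ∉ U, h x = f x) ∧ IsHarmonicOn tail head c U h := by
  let extend := Function.ExtendByZero.linearMap ℝ ((↑) : U → V)
  have extend_out : ∀ g, ∀ x ∉ U, extend g x = 0 := fun g x hx =>
    Function.extend_apply' _ _ _ (by simpa using hx)
  let T := LinearMap.funLeft ℝ ℝ ((↑) : U → V) ∘ₗ laplacian tail head c ∘ₗ extend
  have hT : Function.Surjective T := by
    refine LinearMap.injective_iff_surjective.1 ((injective_iff_map_eq_zero T).2 fun g hg => ?_)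
    have hharm : IsHarmonicOn tail head c U (extend g) :=
      isHarmonicOn_iff.2 fun x hx => congrFun hg ⟨x, hx⟩
    refine Function.extend_injective Subtype.val_injective (0 : V → ℝ) ?_
    exact (eq_zero_of_isHarmonicOn hc hconn hU hharm (extend_out g)).trans
      (map_zero extend).symm
  obtain ⟨g, hg⟩ := hT fun x => -laplacian tail head c f x
  refine ⟨f + extend g, fun x hx => by simp [extend_out g x hx], isHarmonicOn_iff.2 fun x hx => ?_⟩
  have := congrFun hg ⟨x, hx⟩
  simp only [T, LinearMap.coe_comp, Function.comp_apply, LinearMap.funLeft_apply] at this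
  rw [map_add, Pi.add_apply, this, add_neg_cancel]

end Network

open Network in
/-- The projection property is expressed by `c dh` lying in `I_U` with `c df − c dh`
orthogonal to `I_U`. -/
theorem stmt_4_general
    (rev : E → E) (hrev : ∀ e, rev (rev e) = e)
    (tail head : E → V) (htail_rev : ∀ e, tail (rev e) = head e)
    (c : E → ℝ) (hc : ∀ e, 0 < c e) (hcrev : ∀ e, c (rev e) = c e)
    (hconn : ∀ x y : V,
      Relation.ReflTransGen (fun a b => ∃ e, tail e = a ∧ head e = b) x y)
    (U : Finset V) (hU : U ≠ univ) (f : V → ℝ) :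
    ∃ h : V → ℝ,
      ((∀ x ∉ U, h x = f x) ∧
        (∀ x ∈ U, h x * ∑ e ∈ univ.filter (fun e => tail e = x), c e =
          ∑ e ∈ univ.filter (fun e => tail e = x), c e * h (head e))) ∧
      (∀ h' : V → ℝ,
        ((∀ x ∉ U, h' x = f x) ∧
          (∀ x ∈ U, h' x * ∑ e ∈ univ.filter (fun e => tail e = x), c e =
            ∑ e ∈ univ.filter (fun e => tail e = x), c e * h' (head e))) →
        h' = h) ∧
      (fun e => c e * (h (head e) - h (tail e))) ∈ currentSpace tail head c U ∧
      (∀ ψ ∈ currentSpace tail head c U,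
        rInner c (fun e => c e * (f (head e) - f (tail e))
          - c e * (h (head e) - h (tail e))) ψ = 0) ∧
      energyV tail head c h ≤ energyV tail head c f := by
  obtain ⟨h, hhf, hh⟩ := exists_isHarmonicOn_eq_off hc hconn hU f
  have hc₀ : ∀ e, c e ≠ 0 := fun e => (hc e).ne'
  have hI : current tail head c h ∈ currentSpace tail head c U :=
    Submodule.subset_span ⟨h, hh, rfl⟩
  have horth : ∀ ψ ∈ currentSpace tail head c U,
      rInner c (current tail head c f - current tail head c h) ψ = 0 := fun ψ hψ => by
    rw [← current_sub]
    exact rInner_current_eq_zero_of_mem_currentSpace hc₀ hrev htail_rev hcrev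
      (fun x hx => by simp [hhf x hx]) hψ
  refine ⟨h, ⟨hhf, hh⟩, fun h' ⟨hh'f, hh'⟩ => ?_, hI, horth, ?_⟩
  · exact sub_eq_zero.1 <| eq_zero_of_isHarmonicOn hc hconn hU (IsHarmonicOn.sub hh' hh)
      fun x hx => by simp [hh'f x hx, hhf x hx]
  · rw [energyV_eq_rInner hc₀, energyV_eq_rInner hc₀]
    exact rInner_self_le_of_rInner_sub_eq_zero (fun e => (hc e).le) (horth _ hI)

/-- The orthogonal projection of `c df` onto `I_U` is `c dh`,
where `h` is the unique function equal to `f` off `U` and discrete harmonic on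
`U`; consequently `ℰ(h) ≤ ℰ(f)`. The projection property is expressed by `c dh`
lying in `I_U` with `c df − c dh` orthogonal to `I_U`. -/
theorem stmt_4
    (rev : E → E) (hrev : ∀ e, rev (rev e) = e) (hrevne : ∀ e, rev e ≠ e)
    (tail head : E → V) (htail_rev : ∀ e, tail (rev e) = head e)
    (c : E → ℝ) (hc : ∀ e, 0 < c e) (hcrev : ∀ e, c (rev e) = c e)
    (hconn : ∀ x y : V,
      Relation.ReflTransGen (fun a b => ∃ e, tail e = a ∧ head e = b) x y)
    (U : Finset V) (hU : U ≠ univ) (f : V → ℝ) :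
    ∃ h : V → ℝ,
      ((∀ x ∉ U, h x = f x) ∧
        (∀ x ∈ U, h x * ∑ e ∈ univ.filter (fun e => tail e = x), c e =
          ∑ e ∈ univ.filter (fun e => tail e = x), c e * h (head e))) ∧
      (∀ h' : V → ℝ,
        ((∀ x ∉ U, h' x = f x) ∧
          (∀ x ∈ U, h' x * ∑ e ∈ univ.filter (fun e => tail e = x), c e =
            ∑ e ∈ univ.filter (fun e => tail e = x), c e * h' (head e))) →
        h' = h) ∧
      (fun e => c e * (h (head e) - h (tail e))) ∈ currentSpace tail head c U ∧
      (∀ ψ ∈ currentSpace tail head c U,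
        rInner c (fun e => c e * (f (head e) - f (tail e))
          - c e * (h (head e) - h (tail e))) ψ = 0) ∧
      energyV tail head c h ≤ energyV tail head c f :=
  stmt_4_general rev hrev tail head htail_rev c hc hcrev hconn U hU f
end

section
/- On a finite network with nonempty disjoint vertex subsets A, B, let θ be a flow between A and B (a flow on V∖(A∪B)) with strength(θ) = ∑_{e⁻∈A} θ(e), and let f : V → ℝ satisfy gap_{A,B}(f) := min_{b∈B} f(b) − max_{a∈A} f(a) ≥ 0. Then strength(θ)·gap_{A,B}(f) ≤ ℰ(θ)^{1/2}·ℰ(f)^{1/2}. -/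
open Finset

/-!
Clip `f` to the interval `[a, b]` with `a = max_A f` and `b = min_B f`. The clipped function `g`
equals `a` on `A` and `b` on `B`, and since clipping is `1`-Lipschitz, `ℰ(g) ≤ ℰ(f)`. Summation by
parts against the antisymmetric `θ`, whose divergence vanishes off `A ∪ B` and sums to zero, gives
`∑ₑ θ(e) (g(e⁺) - g(e⁻)) = 2 strength(θ) (b - a)`, and the weighted Cauchy–Schwarz inequality
bounds the left side by `(∑ θ² / c)^{1/2} (∑ c (dg)²)^{1/2} = 2 ℰ(θ)^{1/2} ℰ(g)^{1/2}`.
-/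

lemma sum_mul_le_sqrt_mul_sqrt_of_pos {ι : Type*} (s : Finset ι) {c : ι → ℝ}
    (hc : ∀ i ∈ s, 0 < c i) (θ d : ι → ℝ) :
    ∑ i ∈ s, θ i * d i ≤
      Real.sqrt (∑ i ∈ s, θ i ^ 2 * (c i)⁻¹) * Real.sqrt (∑ i ∈ s, c i * d i ^ 2) := by
  rw [← Real.sqrt_mul (sum_nonneg fun i hi => by have := hc i hi; positivity)]
  refine Real.le_sqrt_of_sq_le (sum_sq_le_sum_mul_sum_of_sq_le_mul s
    (fun i hi => by have := hc i hi; positivity) (fun i hi => by have := hc i hi; positivity)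
    fun i hi => le_of_eq ?_)
  field_simp [(hc i hi).ne']

lemma sum_mul_sq_comp_sub_le {ι : Type*} (s : Finset ι) {c : ι → ℝ} (hc : ∀ i ∈ s, 0 ≤ c i)
    {φ : ℝ → ℝ} (hφ : LipschitzWith 1 φ) (u v : ι → ℝ) :
    ∑ i ∈ s, c i * (φ (u i) - φ (v i)) ^ 2 ≤ ∑ i ∈ s, c i * (u i - v i) ^ 2 := by
  refine sum_le_sum fun i hi => mul_le_mul_of_nonneg_left ?_ (hc i hi)
  have h := hφ.dist_le_mul (u i) (v i)
  rw [NNReal.coe_one, one_mul, Real.dist_eq, Real.dist_eq] at h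
  exact sq_le_sq.2 h

lemma sum_mul_eq_of_vanishing_off {V : Type*} [Fintype V] {A B : Finset V} {D g : V → ℝ}
    {a b : ℝ} (hD : ∀ x, x ∉ A → x ∉ B → D x = 0) (hsum : ∑ x, D x = 0)
    (hgA : ∀ x ∈ A, g x = a) (hgB : ∀ x ∈ B, g x = b) :
    ∑ x, D x * g x = (a - b) * ∑ x ∈ A, D x := by
  have hshift : ∑ x, D x * g x = ∑ x, D x * (g x - b) := by
    simp only [mul_sub, sum_sub_distrib, ← sum_mul, hsum, zero_mul, sub_zero]
  have hA : ∑ x ∈ A, D x * (g x - b) = ∑ x, D x * (g x - b) := by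
    refine sum_subset (subset_univ A) fun x _ hxA => ?_
    by_cases hxB : x ∈ B
    · rw [hgB x hxB, sub_self, mul_zero]
    · rw [hD x hxA hxB, zero_mul]
  rw [hshift, ← hA, mul_sum]
  exact sum_congr rfl fun x hx => by rw [hgA x hx]; ring

section Flows

variable {V E : Type*} [Fintype E]

def netOutflow [DecidableEq V] (tail : E → V) (θ : E → ℝ) (x : V) : ℝ :=
  ∑ e ∈ univ.filter (fun e => tail e = x), θ e

lemma sum_netOutflow [DecidableEq V] (tail : E → V) (θ : E → ℝ) (S : Finset V) :
    ∑ x ∈ S, netOutflow tail θ x = ∑ e ∈ univ.filter (fun e => tail e ∈ S), θ e :=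
  sum_fiberwise_eq_sum_filter univ S tail θ

lemma sum_netOutflow_mul [Fintype V] [DecidableEq V] (tail : E → V) (θ : E → ℝ) (g : V → ℝ) :
    ∑ x, netOutflow tail θ x * g x = ∑ e, θ e * g (tail e) := by
  rw [← sum_fiberwise univ tail (fun e => θ e * g (tail e))]
  refine sum_congr rfl fun x _ => ?_
  rw [netOutflow, sum_mul]
  exact sum_congr rfl fun e he => by rw [(mem_filter.1 he).2]

variable {rev : E → E} {tail head : E → V} {θ : E → ℝ}

lemma sum_mul_comp_head_of_antisymm (hrev : ∀ e, rev (rev e) = e)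
    (htail_rev : ∀ e, tail (rev e) = head e) (hθanti : ∀ e, θ (rev e) = -θ e) (g : V → ℝ) :
    ∑ e, θ e * g (head e) = -∑ e, θ e * g (tail e) := by
  have hhead_rev : ∀ e, head (rev e) = tail e := fun e => by rw [← htail_rev, hrev]
  rw [← (Function.Involutive.bijective hrev).sum_comp (fun e => θ e * g (head e))]
  simp only [hθanti, hhead_rev, neg_mul, sum_neg_distrib]

variable [Fintype V] [DecidableEq V]

lemma sum_netOutflow_eq_zero_of_antisymm (hrev : ∀ e, rev (rev e) = e)
    (htail_rev : ∀ e, tail (rev e) = head e) (hθanti : ∀ e, θ (rev e) = -θ e) :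
    ∑ x, netOutflow tail θ x = 0 := by
  have h := sum_mul_comp_head_of_antisymm hrev htail_rev hθanti (fun _ => 1)
  have h1 := sum_netOutflow_mul tail θ (fun _ => 1)
  simp only [mul_one] at h h1
  linarith

lemma sum_mul_sub_eq_neg_two_mul_sum_netOutflow (hrev : ∀ e, rev (rev e) = e)
    (htail_rev : ∀ e, tail (rev e) = head e) (hθanti : ∀ e, θ (rev e) = -θ e) (g : V → ℝ) :
    ∑ e, θ e * (g (head e) - g (tail e)) = -2 * ∑ x, netOutflow tail θ x * g x := by
  simp only [mul_sub, sum_sub_distrib, sum_mul_comp_head_of_antisymm hrev htail_rev hθanti,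
    sum_netOutflow_mul]
  ring

end Flows

theorem stmt_7_general {V E : Type*} [Fintype V] [Fintype E] [DecidableEq V]
    (rev : E → E) (hrev : ∀ e, rev (rev e) = e)
    (tail head : E → V) (htail_rev : ∀ e, tail (rev e) = head e)
    (c : E → ℝ) (hc : ∀ e, 0 < c e)
    (A B : Finset V) (hA : A.Nonempty) (hB : B.Nonempty)
    (θ : E → ℝ) (hθanti : ∀ e, θ (rev e) = - θ e)
    (hflow : ∀ x, x ∉ A → x ∉ B →
      ∑ e ∈ univ.filter (fun e => tail e = x), θ e = 0)
    (f : V → ℝ)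
    (hgap : 0 ≤ B.inf' hB f - A.sup' hA f) :
    (∑ e ∈ univ.filter (fun e => tail e ∈ A), θ e) * (B.inf' hB f - A.sup' hA f)
      ≤ Real.sqrt ((1 / 2) * ∑ e, θ e ^ 2 * (c e)⁻¹) *
        Real.sqrt ((1 / 2) * ∑ e, c e * (f (head e) - f (tail e)) ^ 2) := by
  set a := A.sup' hA f
  set b := B.inf' hB f
  have hab : a ≤ b := sub_nonneg.1 hgap
  set g : V → ℝ := fun x => Set.projIcc a b hab (f x)
  have hgA : ∀ x ∈ A, g x = a := fun x hx => by
    simp [g, Set.projIcc_of_le_left hab (le_sup' f hx)]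
  have hgB : ∀ x ∈ B, g x = b := fun x hx => by
    simp [g, Set.projIcc_of_right_le hab (inf'_le f hx)]
  have hgreen : ∑ e, θ e * (g (head e) - g (tail e))
      = 2 * (∑ e ∈ univ.filter (fun e => tail e ∈ A), θ e) * (b - a) := by
    rw [sum_mul_sub_eq_neg_two_mul_sum_netOutflow hrev htail_rev hθanti,
      sum_mul_eq_of_vanishing_off (D := netOutflow tail θ) hflow
        (sum_netOutflow_eq_zero_of_antisymm hrev htail_rev hθanti) hgA hgB, sum_netOutflow]
    ring
  have hclip : ∑ e, c e * (g (head e) - g (tail e)) ^ 2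
      ≤ ∑ e, c e * (f (head e) - f (tail e)) ^ 2 :=
    sum_mul_sq_comp_sub_le univ (fun e _ => (hc e).le)
      (by simpa using (LipschitzWith.subtype_val _).comp (LipschitzWith.projIcc hab)) _ _
  calc (∑ e ∈ univ.filter (fun e => tail e ∈ A), θ e) * (b - a)
      = 1 / 2 * ∑ e, θ e * (g (head e) - g (tail e)) := by rw [hgreen]; ring
    _ ≤ 1 / 2 * (Real.sqrt (∑ e, θ e ^ 2 * (c e)⁻¹) *
          Real.sqrt (∑ e, c e * (g (head e) - g (tail e)) ^ 2)) := by
        gcongr; exact sum_mul_le_sqrt_mul_sqrt_of_pos univ (fun e _ => hc e) _ _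
    _ ≤ 1 / 2 * (Real.sqrt (∑ e, θ e ^ 2 * (c e)⁻¹) *
          Real.sqrt (∑ e, c e * (f (head e) - f (tail e)) ^ 2)) := by gcongr
    _ = _ := by
        rw [Real.sqrt_mul (by norm_num), Real.sqrt_mul (by norm_num), mul_mul_mul_comm,
          Real.mul_self_sqrt (by norm_num)]

/-- Strength–gap inequality (Dirichlet/Thomson):
`strength(θ) · gap_{A,B}(f) ≤ ℰ(θ)^{1/2} ℰ(f)^{1/2}`. -/
theorem stmt_7 {V E : Type*} [Fintype V] [Fintype E] [DecidableEq V]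
    (rev : E → E) (hrev : ∀ e, rev (rev e) = e) (hrevne : ∀ e, rev e ≠ e)
    (tail head : E → V) (htail_rev : ∀ e, tail (rev e) = head e)
    (c : E → ℝ) (hc : ∀ e, 0 < c e) (hcrev : ∀ e, c (rev e) = c e)
    (A B : Finset V) (hA : A.Nonempty) (hB : B.Nonempty) (hAB : Disjoint A B)
    (θ : E → ℝ) (hθanti : ∀ e, θ (rev e) = - θ e)
    (hflow : ∀ x, x ∉ A → x ∉ B →
      ∑ e ∈ univ.filter (fun e => tail e = x), θ e = 0)
    (f : V → ℝ)
    (hgap : 0 ≤ B.inf' hB f - A.sup' hA f) :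
    (∑ e ∈ univ.filter (fun e => tail e ∈ A), θ e) * (B.inf' hB f - A.sup' hA f)
      ≤ Real.sqrt ((1 / 2) * ∑ e, θ e ^ 2 * (c e)⁻¹) *
        Real.sqrt ((1 / 2) * ∑ e, c e * (f (head e) - f (tail e)) ^ 2) :=
  stmt_7_general rev hrev tail head htail_rev c hc A B hA hB θ hθanti hflow f hgap
end

section
/- Let Q = [v₁,w₁,v₂,w₂] be a quadrilateral with orthogonal diagonals whose counterclockwise boundary visits v₁,w₁,v₂,w₂ in order. Let 𝐯 and 𝐰 be the unit vectors in the directions of v₂ − v₁ and w₂ − w₁ respectively. Then 𝐰 is the counterclockwise rotation of 𝐯 by the angle π/2. -/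
/-!
The shoelace sum of `[v₁,w₁,v₂,w₂]` is the cross product `a × b` of the diagonals
`a = v₂ - v₁`, `b = w₂ - w₁`. By Lagrange's identity `⟪a, b⟫² + (a × b)² = ‖a‖² ‖b‖²`, so
orthogonality together with a positive signed area forces `a × b = ‖a‖ ‖b‖`, and then
`‖a‖ • b` is `‖b‖` times the rotation of `a` by `π/2`.
-/

namespace EuclideanSpace

def cross (a b : EuclideanSpace ℝ (Fin 2)) : ℝ := a 0 * b 1 - a 1 * b 0

variable (a b : EuclideanSpace ℝ (Fin 2))

theorem inner_fin_two : inner ℝ a b = a 0 * b 0 + a 1 * b 1 := by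
  simp only [PiLp.inner_apply, Fin.sum_univ_two, RCLike.inner_apply, conj_trivial]
  ring

theorem norm_sq_fin_two : ‖a‖ ^ 2 = a 0 ^ 2 + a 1 ^ 2 := by
  rw [real_norm_sq_eq, Fin.sum_univ_two]

theorem inner_sq_add_cross_sq : inner ℝ a b ^ 2 + cross a b ^ 2 = ‖a‖ ^ 2 * ‖b‖ ^ 2 := by
  rw [inner_fin_two, norm_sq_fin_two, norm_sq_fin_two, cross]
  ring

variable {a b}

theorem cross_eq_norm_mul_norm (horth : inner ℝ a b = 0) (hpos : 0 < cross a b) :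
    cross a b = ‖a‖ * ‖b‖ := by
  have hsq : cross a b ^ 2 = (‖a‖ * ‖b‖) ^ 2 := by
    rw [mul_pow, ← inner_sq_add_cross_sq, horth]
    ring
  exact (sq_eq_sq₀ hpos.le (by positivity)).1 hsq

theorem norm_smul_eq_rotation (horth : inner ℝ a b = 0) (hpos : 0 < cross a b) :
    ‖a‖ * b 0 = -(‖b‖ * a 1) ∧ ‖a‖ * b 1 = ‖b‖ * a 0 := by
  have hcross := cross_eq_norm_mul_norm horth hpos
  have ha : ‖a‖ ≠ 0 := left_ne_zero_of_mul (hcross ▸ hpos.ne')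
  have hnorm := norm_sq_fin_two a
  rw [inner_fin_two] at horth
  rw [cross] at hcross
  constructor <;> refine mul_left_cancel₀ ha ?_
  · linear_combination b 0 * hnorm + a 0 * horth - a 1 * hcross
  · linear_combination b 1 * hnorm + a 1 * horth + a 0 * hcross

theorem normalize_eq_rotation (horth : inner ℝ a b = 0) (hpos : 0 < cross a b) :
    (‖b‖⁻¹ • b) 0 = -(‖a‖⁻¹ • a) 1 ∧ (‖b‖⁻¹ • b) 1 = (‖a‖⁻¹ • a) 0 := by
  have hab : 0 < ‖a‖ * ‖b‖ := cross_eq_norm_mul_norm horth hpos ▸ hpos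
  have ha : ‖a‖ ≠ 0 := left_ne_zero_of_mul hab.ne'
  have hb : ‖b‖ ≠ 0 := right_ne_zero_of_mul hab.ne'
  obtain ⟨h0, h1⟩ := norm_smul_eq_rotation horth hpos
  simp only [PiLp.smul_apply, smul_eq_mul]
  constructor <;> field_simp <;> linarith

end EuclideanSpace

theorem shoelace_eq_cross (v₁ w₁ v₂ w₂ : EuclideanSpace ℝ (Fin 2)) :
    (v₁ 0 * w₁ 1 - v₁ 1 * w₁ 0) + (w₁ 0 * v₂ 1 - w₁ 1 * v₂ 0)
        + (v₂ 0 * w₂ 1 - v₂ 1 * w₂ 0) + (w₂ 0 * v₁ 1 - w₂ 1 * v₁ 0)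
      = EuclideanSpace.cross (v₂ - v₁) (w₂ - w₁) := by
  simp only [EuclideanSpace.cross, PiLp.sub_apply]
  ring

theorem stmt_16_general
    (v₁ w₁ v₂ w₂ : EuclideanSpace ℝ (Fin 2))
    (horth : (inner ℝ (v₂ - v₁) (w₂ - w₁) : ℝ) = 0)
    (hccw : 0 <
      (v₁ 0 * w₁ 1 - v₁ 1 * w₁ 0) + (w₁ 0 * v₂ 1 - w₁ 1 * v₂ 0)
        + (v₂ 0 * w₂ 1 - v₂ 1 * w₂ 0) + (w₂ 0 * v₁ 1 - w₂ 1 * v₁ 0)) :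
    (‖w₂ - w₁‖⁻¹ • (w₂ - w₁)) 0 = - (‖v₂ - v₁‖⁻¹ • (v₂ - v₁)) 1 ∧
    (‖w₂ - w₁‖⁻¹ • (w₂ - w₁)) 1 = (‖v₂ - v₁‖⁻¹ • (v₂ - v₁)) 0 :=
  EuclideanSpace.normalize_eq_rotation horth (shoelace_eq_cross v₁ w₁ v₂ w₂ ▸ hccw)

/-- Orientation lemma: for a quadrilateral `[v₁,w₁,v₂,w₂]`
with orthogonal diagonals whose counterclockwise boundary visits the vertices
in this order (counterclockwise orientation is expressed by positivity of the
shoelace signed area), the unit vector `𝐰` along `w₂ − w₁` is the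
counterclockwise rotation by `π/2` (i.e. `(a,b) ↦ (−b,a)`) of the unit vector
`𝐯` along `v₂ − v₁`. -/
theorem stmt_16
    (v₁ w₁ v₂ w₂ : EuclideanSpace ℝ (Fin 2))
    (hnev : v₁ ≠ v₂) (hnew : w₁ ≠ w₂)
    (horth : (inner ℝ (v₂ - v₁) (w₂ - w₁) : ℝ) = 0)
    (hccw : 0 <
      (v₁ 0 * w₁ 1 - v₁ 1 * w₁ 0) + (w₁ 0 * v₂ 1 - w₁ 1 * v₂ 0)
        + (v₂ 0 * w₂ 1 - v₂ 1 * w₂ 0) + (w₂ 0 * v₁ 1 - w₂ 1 * v₁ 0)) :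
    (‖w₂ - w₁‖⁻¹ • (w₂ - w₁)) 0 = - (‖v₂ - v₁‖⁻¹ • (v₂ - v₁)) 1 ∧
    (‖w₂ - w₁‖⁻¹ • (w₂ - w₁)) 1 = (‖v₂ - v₁‖⁻¹ • (v₂ - v₁)) 0 :=
  stmt_16_general v₁ w₁ v₂ w₂ horth hccw
end

section
/- Let G be a finite plane graph whose inner faces are all bounded by simple closed curves, and let H be a block (maximal 2-connected subgraph) of G. Then every inner face of H is an inner face of G. -/
open Set

/-- A finite plane graph: finitely many vertices (points of the plane) together
with finitely many edges, each edge a continuous arc joining two vertices,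
properly embedded (arcs are injective away from the endpoints, meet vertices
only at their endpoints, and distinct arcs meet only at common endpoints). -/
structure FinPlaneGraph where
  V : Finset (EuclideanSpace ℝ (Fin 2))
  n : ℕ
  edge : Fin n → ℝ → EuclideanSpace ℝ (Fin 2)
  cont : ∀ i, ContinuousOn (edge i) (Icc 0 1)
  inj : ∀ i, InjOn (edge i) (Ico 0 1)
  inj' : ∀ i, ∀ s ∈ Ioo (0 : ℝ) 1, edge i s ≠ edge i 1
  ends : ∀ i, edge i 0 ∈ V ∧ edge i 1 ∈ V
  int_not_vertex : ∀ i, ∀ t ∈ Ioo (0 : ℝ) 1, edge i t ∉ V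
  edges_meet_at_ends : ∀ i j, i ≠ j → ∀ s ∈ Ioo (0 : ℝ) 1,
    edge i s ∉ edge j '' Icc 0 1

/-- The union of the vertices and edges of a plane graph, as a subset of the
plane. -/
def FinPlaneGraph.carrier (G : FinPlaneGraph) : Set (EuclideanSpace ℝ (Fin 2)) :=
  ↑G.V ∪ ⋃ i, G.edge i '' Icc 0 1

/-- A subgraph of a plane graph, given by a subset of the vertices and a subset
of the edges containing the endpoints of all its edges. -/
structure FinPlaneGraph.Sub (G : FinPlaneGraph) where
  W : Finset (EuclideanSpace ℝ (Fin 2))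
  S : Finset (Fin G.n)
  hW : W ⊆ G.V
  hends : ∀ i ∈ S, G.edge i 0 ∈ W ∧ G.edge i 1 ∈ W

/-- The point set of a subgraph. -/
def FinPlaneGraph.Sub.carrier {G : FinPlaneGraph} (H : G.Sub) :
    Set (EuclideanSpace ℝ (Fin 2)) :=
  ↑H.W ∪ ⋃ i ∈ H.S, G.edge i '' Icc 0 1

/-- A subgraph is 2-connected if its point set is connected and remains
connected after removing any single vertex. -/
def FinPlaneGraph.Sub.TwoConnected {G : FinPlaneGraph} (H : G.Sub) : Prop :=
  IsConnected H.carrier ∧ ∀ v ∈ H.W, IsConnected (H.carrier \ {v})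

/-- A block of a plane graph: a maximal 2-connected subgraph. -/
def FinPlaneGraph.Sub.IsBlock {G : FinPlaneGraph} (H : G.Sub) : Prop :=
  H.TwoConnected ∧
    ∀ H' : G.Sub, H'.TwoConnected → H.W ⊆ H'.W → H.S ⊆ H'.S →
      H'.W = H.W ∧ H'.S = H.S

/-- `f` is an inner face of the set `X` (union of vertices and edges of a plane
graph): a bounded connected component of the complement of `X`. -/
def IsInnerFace (X f : Set (EuclideanSpace ℝ (Fin 2))) : Prop :=
  (∃ x ∉ X, f = connectedComponentIn Xᶜ x) ∧ Bornology.IsBounded f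

/-!
Let `f` be an inner face of the block `H`; it suffices to show that `f` contains no point of `G`.
Otherwise, start from a vertex `v` of `G` in the closure of `f` and let `K` be the part of `G`
reachable from `v` along edges meeting `f` (none of them is an edge of `H`). If `K` met `H` in two
distinct vertices, a path in `K` between them would be an ear of `H`: adding it keeps `H`
2-connected, against maximality. So `K` meets `H`, and hence the rest `L` of `G`, in at most one
point. Every face of `G` inside `f` is bounded by a simple closed curve, which therefore
lies entirely in `K` or entirely in `L`. This splits `f` into two relatively open parts, the side
of `K` and the side of `L`, and both are nonempty: `f` meets `K`, and its frontier, which has at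
least two points, reaches `L \ K`.
-/

open Metric Filter Topology SimpleGraph

local notation "ℝ²" => EuclideanSpace ℝ (Fin 2)

section Topology

variable {X : Type*} [TopologicalSpace X]

theorem IsPreconnected.subset_of_disjoint_frontier {s t : Set X} (hs : IsPreconnected s)
    (ht : IsOpen t) (hfr : Disjoint s (frontier t)) (hne : (s ∩ t).Nonempty) : s ⊆ t := by
  refine hs.subset_of_closure_inter_subset ht hne fun x ⟨hxc, hxs⟩ => ?_
  by_contra hxt
  exact hfr.ne_of_mem hxs ⟨hxc, by rwa [ht.interior_eq]⟩ rfl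

theorem IsPreconnected.inter_frontier_nonempty {s t : Set X} (hs : IsPreconnected s)
    (ht : IsOpen t) (hst : (s ∩ t).Nonempty) (hsnt : (s \ t).Nonempty) :
    (s ∩ frontier t).Nonempty := by
  rw [← not_disjoint_iff_nonempty_inter]
  obtain ⟨x, hxs, hxt⟩ := hsnt
  exact fun hfr => hxt (hs.subset_of_disjoint_frontier ht hfr hst hxs)

theorem IsPreconnected.subset_or_subset_of_isClosed {s K L : Set X} (hs : IsPreconnected s)
    (hK : IsClosed K) (hL : IsClosed L) (hsKL : s ⊆ K ∪ L) (hdisj : Disjoint s (K ∩ L)) :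
    s ⊆ K ∨ s ⊆ L := by
  by_contra! h
  obtain ⟨x, hxs, hxK⟩ := not_subset.1 h.1
  obtain ⟨y, hys, hyL⟩ := not_subset.1 h.2
  obtain ⟨z, hzs, hz⟩ := isPreconnected_closed_iff.1 hs K L hK hL hsKL
    ⟨y, hys, (hsKL hys).resolve_right hyL⟩ ⟨x, hxs, (hsKL hxs).resolve_left hxK⟩
  exact hdisj.ne_of_mem hzs hz rfl

theorem IsConnected.union_of_isPreconnected {s t : Set X} (hs : IsConnected s)
    (ht : IsPreconnected t) {x : X} (hxs : x ∈ s) (hxt : x ∈ t) : IsConnected (s ∪ t) :=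
  ⟨hs.nonempty.mono subset_union_left, hs.isPreconnected.union x hxs hxt ht⟩

theorem frontier_connectedComponentIn_subset [LocallyConnectedSpace X] {U : Set X}
    (hU : IsOpen U) (x : X) : frontier (connectedComponentIn U x) ⊆ Uᶜ := by
  intro y hy hyU
  rw [hU.connectedComponentIn.frontier_eq] at hy
  obtain ⟨z, hzy, hzx⟩ := mem_closure_iff.1 hy.1 _ hU.connectedComponentIn
    (mem_connectedComponentIn hyU)
  exact hy.2 (connectedComponentIn_eq hzx ▸ connectedComponentIn_eq hzy ▸
    mem_connectedComponentIn hyU)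

theorem subset_connectedComponentIn_of_disjoint_frontier [LocallyConnectedSpace X] {C N : Set X}
    (hC : IsClosed C) (hN : IsPreconnected N) {y : X} (hyN : y ∈ N) (hyC : y ∉ C)
    (hfr : Disjoint N (frontier (connectedComponentIn Cᶜ y))) : N ⊆ connectedComponentIn Cᶜ y :=
  hN.subset_of_disjoint_frontier hC.isOpen_compl.connectedComponentIn hfr
    ⟨y, hyN, mem_connectedComponentIn hyC⟩

end Topology

section Separation

variable {X : Type*} [TopologicalSpace X] {K L : Set X}

def sideOf (K L : Set X) : Set X :=
  K ∪ {y | y ∉ K ∪ L ∧ frontier (connectedComponentIn (K ∪ L)ᶜ y) ⊆ K}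

theorem mem_sideOf_iff_of_notMem {y : X} (hy : y ∉ K ∪ L) :
    y ∈ sideOf K L ↔ frontier (connectedComponentIn (K ∪ L)ᶜ y) ⊆ K := by
  rw [sideOf, mem_union, or_iff_right fun h => hy (.inl h)]
  exact and_iff_right hy

variable [LocallyConnectedSpace X]

theorem eventually_notMem_sideOf (hK : IsClosed K) (hL : IsClosed L) {z : X} (hzL : z ∈ L)
    (hzK : z ∉ K) : ∀ᶠ y in 𝓝 z, y ∉ sideOf K L := by
  filter_upwards [connectedComponentIn_mem_nhds (hK.isOpen_compl.mem_nhds hzK)] with y hy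
  rintro (hyK | ⟨hyKL, hfr⟩)
  · exact connectedComponentIn_subset _ _ hy hyK
  · have hsub := subset_connectedComponentIn_of_disjoint_frontier (hK.union hL)
      isPreconnected_connectedComponentIn hy hyKL
      ((disjoint_compl_left.mono_left (connectedComponentIn_subset _ _)).mono_right hfr)
    exact connectedComponentIn_subset _ _ (hsub (mem_connectedComponentIn hzK)) (.inr hzL)

theorem eventually_mem_sideOf (hK : IsClosed K) (hL : IsClosed L) {U : Set X}
    (hface : ∀ y ∈ U, y ∉ K ∪ L → frontier (connectedComponentIn (K ∪ L)ᶜ y) ⊆ K ∨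
      frontier (connectedComponentIn (K ∪ L)ᶜ y) ⊆ L)
    {z : X} (hzK : z ∈ K) (hzL : z ∉ L) : ∀ᶠ y in 𝓝 z, y ∈ U → y ∈ sideOf K L := by
  filter_upwards [connectedComponentIn_mem_nhds (hL.isOpen_compl.mem_nhds hzL)] with y hy hyU
  by_cases hyK : y ∈ K
  · exact .inl hyK
  have hyKL : y ∉ K ∪ L := fun h => h.elim hyK (connectedComponentIn_subset _ _ hy)
  refine (mem_sideOf_iff_of_notMem hyKL).2 ((hface y hyU hyKL).resolve_right fun hfr => ?_)
  have hsub := subset_connectedComponentIn_of_disjoint_frontier (hK.union hL)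
    isPreconnected_connectedComponentIn hy hyKL
    ((disjoint_compl_left.mono_left (connectedComponentIn_subset _ _)).mono_right hfr)
  exact connectedComponentIn_subset _ _ (hsub (mem_connectedComponentIn hzL)) (.inl hzK)

theorem eventually_mem_sideOf_iff (hK : IsClosed K) (hL : IsClosed L) {z : X}
    (hz : z ∉ K ∪ L) : ∀ᶠ y in 𝓝 z, y ∈ sideOf K L ↔ z ∈ sideOf K L := by
  filter_upwards [(hK.union hL).isOpen_compl.connectedComponentIn.mem_nhds
    (mem_connectedComponentIn hz)] with y hy
  have hyKL : y ∉ K ∪ L := connectedComponentIn_subset _ _ hy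
  rw [mem_sideOf_iff_of_notMem hz, mem_sideOf_iff_of_notMem hyKL, connectedComponentIn_eq hy]

/-- `sideOf K L` is relatively clopen in `U`. -/
theorem disjoint_closure_sdiff_of_frontier_subset {U : Set X} (hU : IsPreconnected U)
    (hK : IsClosed K) (hL : IsClosed L) (hKLU : Disjoint (K ∩ L) U)
    (hface : ∀ y ∈ U, y ∉ K ∪ L → frontier (connectedComponentIn (K ∪ L)ᶜ y) ⊆ K ∨
      frontier (connectedComponentIn (K ∪ L)ᶜ y) ⊆ L)
    (hUK : (U ∩ K).Nonempty) : Disjoint (closure U) (L \ K) := by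
  rw [Set.disjoint_left]
  intro z hzU ⟨hzL, hzK⟩
  set O₁ := {y | ∀ᶠ y' in 𝓝 y, y' ∈ U → y' ∈ sideOf K L}
  set O₂ := {y | ∀ᶠ y' in 𝓝 y, y' ∉ sideOf K L}
  have hcover : U ⊆ O₁ ∪ O₂ := by
    intro y hyU
    by_cases hyK : y ∈ K
    · have hyL : y ∉ L := fun hyL => hKLU.ne_of_mem ⟨hyK, hyL⟩ hyU rfl
      exact .inl (eventually_mem_sideOf hK hL hface hyK hyL)
    by_cases hyL : y ∈ L
    · exact .inr (eventually_notMem_sideOf hK hL hyL hyK)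
    have hy : y ∉ K ∪ L := fun h => h.elim hyK hyL
    by_cases hyS : y ∈ sideOf K L
    · exact .inl ((eventually_mem_sideOf_iff hK hL hy).mono fun y' h _ => h.2 hyS)
    · exact .inr ((eventually_mem_sideOf_iff hK hL hy).mono fun y' h => h.not.2 hyS)
  have hU₁ : (U ∩ O₁).Nonempty := by
    obtain ⟨y, hyU, hyK⟩ := hUK
    exact ⟨y, hyU, (hcover hyU).resolve_right fun hy => hy.self_of_nhds (.inl hyK)⟩
  have hU₂ : (U ∩ O₂).Nonempty := by
    rw [inter_comm]
    exact mem_closure_iff.1 hzU O₂ isOpen_setOfPred_eventually_nhds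
      (eventually_notMem_sideOf hK hL hzL hzK)
  obtain ⟨y, hyU, hy₁, hy₂⟩ := hU O₁ O₂ isOpen_setOfPred_eventually_nhds
    isOpen_setOfPred_eventually_nhds hcover hU₁ hU₂
  exact hy₂.self_of_nhds (hy₁.self_of_nhds hyU)

end Separation

section NormedSpace

variable {E : Type*} [NormedAddCommGroup E] [NormedSpace ℝ E]

theorem not_subsingleton_frontier (hE : 1 < Module.rank ℝ E) {f : Set E} (hf : IsOpen f)
    (hne : f.Nonempty) (hb : Bornology.IsBounded f) : ¬ (frontier f).Subsingleton := by
  intro hfr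
  have : Nontrivial E := rank_pos_iff_nontrivial.mp (zero_lt_one.trans hE)
  obtain ⟨a, ha⟩ : ∃ a, frontier f ⊆ {a} := by
    rcases hfr.eq_empty_or_singleton with h | ⟨a, h⟩
    · exact ⟨0, h ▸ empty_subset _⟩
    · exact ⟨a, h.le⟩
  have hin : ({a}ᶜ ∩ f).Nonempty :=
    inter_comm f _ ▸ (dense_compl_singleton a).inter_open_nonempty f hf hne
  obtain ⟨b, hb⟩ : ∃ b, b ∉ insert a f := by
    by_contra! h
    exact NormedSpace.unbounded_univ ℝ E ((hb.insert a).subset fun b _ => h b)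
  have hout : ({a}ᶜ \ f).Nonempty := ⟨b, fun h => hb (.inl h), fun h => hb (.inr h)⟩
  obtain ⟨z, hza, hzf⟩ := (isConnected_compl_singleton_of_one_lt_rank hE a).isPreconnected
    |>.inter_frontier_nonempty hf hin hout
  exact hza (ha hzf)

end NormedSpace

section Sphere

variable {E : Type*} [NormedAddCommGroup E] [InnerProductSpace ℝ E]

theorem isPreconnected_sphere_compl_singleton (w : sphere (0 : E) 1) :
    IsPreconnected ({w}ᶜ : Set (sphere (0 : E) 1)) := by
  have hw := norm_eq_of_mem_sphere w
  have h := (stereographic hw).symm_image_target_eq_source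
  rw [stereographic_source, stereographic_target] at h
  rw [← h]
  exact isPreconnected_univ.image _ (stereographic hw).continuousOn_symm

theorem isPreconnected_sphere_compl_of_subsingleton (hE : 1 < Module.rank ℝ E)
    {B : Set (sphere (0 : E) 1)} (hB : B.Subsingleton) : IsPreconnected Bᶜ := by
  rcases hB.eq_empty_or_singleton with rfl | ⟨w, rfl⟩
  · have := isPreconnected_iff_preconnectedSpace.1 (isPreconnected_sphere hE 0 1)
    simpa using isPreconnected_univ
  · exact isPreconnected_sphere_compl_singleton w

variable {X : Type*} [TopologicalSpace X]

theorem isPreconnected_sdiff_of_homeomorph_sphere (hE : 1 < Module.rank ℝ E) {s : Set X}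
    (e : s ≃ₜ sphere (0 : E) 1) {A : Set X} (hA : A.Subsingleton) : IsPreconnected (s \ A) := by
  have hB : (e '' ((↑) ⁻¹' A)).Subsingleton := (hA.preimage Subtype.val_injective).image e
  have := (e.isPreconnected_preimage.2 (isPreconnected_sphere_compl_of_subsingleton hE hB)).image
    _ continuous_subtype_val.continuousOn
  rwa [preimage_compl, e.preimage_image, image_val_compl, Subtype.image_preimage_coe,
    sdiff_self_inter] at this

theorem subset_or_subset_of_homeomorph_sphere (hE : 1 < Module.rank ℝ E) {s K L : Set X}
    (e : s ≃ₜ sphere (0 : E) 1) (hK : IsClosed K) (hL : IsClosed L) (hsKL : s ⊆ K ∪ L)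
    (hKL : (K ∩ L).Subsingleton) : s ⊆ K ∨ s ⊆ L := by
  have hsub : s ⊆ s \ (K ∩ L) ∪ K ∩ L := fun x hx => by
    by_cases h : x ∈ K ∩ L
    exacts [.inr h, .inl ⟨hx, h⟩]
  refine ((isPreconnected_sdiff_of_homeomorph_sphere hE e hKL).subset_or_subset_of_isClosed hK hL
    (sdiff_subset.trans hsKL) disjoint_sdiff_left).imp (fun h => ?_) (fun h => ?_)
  exacts [hsub.trans (union_subset h inter_subset_left),
    hsub.trans (union_subset h inter_subset_right)]

end Sphere

theorem one_lt_rank_plane : 1 < Module.rank ℝ ℝ² := by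
  rw [← Module.finrank_eq_rank, finrank_euclideanSpace_fin]
  exact_mod_cast one_lt_two

/-- A shortest walk between two distinct points of `W` is a path meeting `W` only at its ends. -/
theorem SimpleGraph.exists_isPath_of_reachable {V : Type*} {Γ : SimpleGraph V} {W : Set V}
    {u v : V} (hu : u ∈ W) (hv : v ∈ W) (huv : u ≠ v) (h : Γ.Reachable u v) :
    ∃ c ∈ W, ∃ d ∈ W, c ≠ d ∧ ∃ q : Γ.Walk c d, q.IsPath ∧
      ∀ z ∈ q.support, z ∈ W → z = c ∨ z = d := by
  classical
  have hex : ∃ n, ∃ c ∈ W, ∃ d ∈ W, c ≠ d ∧ ∃ q : Γ.Walk c d, q.length = n :=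
    ⟨_, u, hu, v, hv, huv, h.some, rfl⟩
  obtain ⟨c, hc, d, hd, hcd, q, hq⟩ := Nat.find_spec hex
  refine ⟨c, hc, d, hd, hcd, q.bypass, q.bypass_isPath, fun z hz hzW => ?_⟩
  by_contra! hzcd
  have hmin := Nat.find_min' hex ⟨c, hc, z, hzW, hzcd.1.symm, q.bypass.takeUntil z hz, rfl⟩
  have := Walk.length_takeUntil_lt_length hz hzcd.2
  have := q.length_bypass_le_length
  omega

section InnerFace

variable {X Y f : Set ℝ²}

theorem IsInnerFace.subset_compl (hf : IsInnerFace X f) : f ⊆ Xᶜ := by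
  obtain ⟨⟨x, -, rfl⟩, -⟩ := hf
  exact connectedComponentIn_subset _ _

theorem IsInnerFace.isOpen (hX : IsClosed X) (hf : IsInnerFace X f) : IsOpen f := by
  obtain ⟨⟨x, -, rfl⟩, -⟩ := hf
  exact hX.isOpen_compl.connectedComponentIn

theorem IsInnerFace.isConnected (hf : IsInnerFace X f) : IsConnected f := by
  obtain ⟨⟨x, hx, rfl⟩, -⟩ := hf
  exact isConnected_connectedComponentIn_iff.2 hx

theorem IsInnerFace.frontier_subset (hX : IsClosed X) (hf : IsInnerFace X f) :
    frontier f ⊆ X := by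
  obtain ⟨⟨x, -, rfl⟩, -⟩ := hf
  simpa using frontier_connectedComponentIn_subset hX.isOpen_compl x

theorem IsInnerFace.closure_subset (hX : IsClosed X) (hf : IsInnerFace X f) :
    closure f ⊆ f ∪ X := by
  rw [closure_eq_self_union_frontier]
  exact union_subset_union_right f (hf.frontier_subset hX)

theorem IsInnerFace.connectedComponentIn_eq (hf : IsInnerFace X f) {y : ℝ²} (hy : y ∈ f) :
    connectedComponentIn Xᶜ y = f := by
  obtain ⟨⟨x, -, rfl⟩, -⟩ := hf
  exact (connectedComponentIn_eq hy).symm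

theorem IsInnerFace.connectedComponentIn_subset (hf : IsInnerFace X f) (hXY : X ⊆ Y) {y : ℝ²}
    (hy : y ∈ f) : connectedComponentIn Yᶜ y ⊆ f :=
  hf.connectedComponentIn_eq hy ▸ connectedComponentIn_mono y (compl_subset_compl.2 hXY)

theorem IsInnerFace.isInnerFace_connectedComponentIn (hf : IsInnerFace X f) (hXY : X ⊆ Y)
    {y : ℝ²} (hy : y ∈ f) (hyY : y ∉ Y) : IsInnerFace Y (connectedComponentIn Yᶜ y) :=
  ⟨⟨y, hyY, rfl⟩, hf.2.subset (hf.connectedComponentIn_subset hXY hy)⟩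

theorem IsInnerFace.mono (hf : IsInnerFace X f) (hXY : X ⊆ Y) (hfY : Disjoint f Y) :
    IsInnerFace Y f := by
  obtain ⟨x, hxX, hfx⟩ := hf.1
  have hxf : x ∈ f := hfx ▸ mem_connectedComponentIn hxX
  refine ⟨⟨x, hfY.notMem_of_mem_left hxf, subset_antisymm ?_
    (hf.connectedComponentIn_subset hXY hxf)⟩, hf.2⟩
  exact hf.isConnected.isPreconnected.subset_connectedComponentIn hxf
    (subset_compl_iff_disjoint_right.2 hfY)

end InnerFace

namespace FinPlaneGraph

section Arcs

variable (G : FinPlaneGraph)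

def arc (i : Fin G.n) : Set ℝ² := G.edge i '' Icc 0 1

variable {G}

theorem left_mem_arc (i : Fin G.n) : G.edge i 0 ∈ G.arc i :=
  mem_image_of_mem _ (left_mem_Icc.2 zero_le_one)

theorem right_mem_arc (i : Fin G.n) : G.edge i 1 ∈ G.arc i :=
  mem_image_of_mem _ (right_mem_Icc.2 zero_le_one)

theorem arc_eq (i : Fin G.n) :
    G.arc i = insert (G.edge i 0) (insert (G.edge i 1) (G.edge i '' Ioo 0 1)) := by
  rw [arc, ← Ico_insert_right zero_le_one, ← Ioo_insert_left zero_lt_one, image_insert_eq,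
    image_insert_eq, insert_comm]

theorem isCompact_arc (i : Fin G.n) : IsCompact (G.arc i) :=
  isCompact_Icc.image_of_continuousOn (G.cont i)

theorem isPreconnected_arc (i : Fin G.n) : IsPreconnected (G.arc i) :=
  isPreconnected_Icc.image _ (G.cont i)

theorem isClosed_carrier : IsClosed G.carrier :=
  G.V.finite_toSet.isClosed.union (isClosed_iUnion_of_finite fun i => (isCompact_arc i).isClosed)

theorem arc_subset_carrier (i : Fin G.n) : G.arc i ⊆ G.carrier :=
  subset_union_of_subset_right (subset_iUnion G.arc i) _

theorem eq_or_eq_of_mem_arc {x : ℝ²} (hx : x ∈ G.V) {i : Fin G.n} (hxi : x ∈ G.arc i) :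
    x = G.edge i 0 ∨ x = G.edge i 1 := by
  rw [arc_eq] at hxi
  rcases hxi with h | h | ⟨t, ht, rfl⟩
  exacts [.inl h, .inr h, absurd hx (G.int_not_vertex i t ht)]

theorem mem_V_of_mem_arc_of_mem_arc {x : ℝ²} {i j : Fin G.n} (hij : i ≠ j) (hxi : x ∈ G.arc i)
    (hxj : x ∈ G.arc j) : x ∈ G.V := by
  rw [arc_eq] at hxi
  rcases hxi with rfl | rfl | ⟨t, ht, rfl⟩
  exacts [(G.ends i).1, (G.ends i).2, absurd hxj (G.edges_meet_at_ends i j hij t ht)]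

theorem arc_subset_closure_interior (i : Fin G.n) :
    G.arc i ⊆ closure (G.edge i '' Ioo 0 1) := by
  rintro _ ⟨t, ht, rfl⟩
  refine ((G.cont i) t ht).mono Ioo_subset_Icc_self |>.mem_closure_image ?_
  rwa [closure_Ioo zero_ne_one]

/-- The interior of the arc is dense in it and free of vertices (the arc may be a loop). -/
theorem isPreconnected_arc_sdiff {v : ℝ²} (hv : v ∈ G.V) (i : Fin G.n) :
    IsPreconnected (G.arc i \ {v}) := by
  refine (isPreconnected_Ioo.image _ ((G.cont i).mono Ioo_subset_Icc_self)).subset_closure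
    ?_ (sdiff_subset.trans (arc_subset_closure_interior i))
  rintro _ ⟨t, ht, rfl⟩
  exact ⟨⟨t, Ioo_subset_Icc_self ht, rfl⟩, fun h => G.int_not_vertex i t ht (h ▸ hv)⟩

namespace Sub

variable (H : G.Sub)

theorem carrier_eq : H.carrier = ↑H.W ∪ ⋃ i ∈ H.S, G.arc i := rfl

theorem isClosed_carrier : IsClosed H.carrier :=
  H.W.finite_toSet.isClosed.union
    (H.S.finite_toSet.isClosed_biUnion fun i _ => (isCompact_arc i).isClosed)

theorem carrier_subset : H.carrier ⊆ G.carrier :=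
  union_subset_union (Finset.coe_subset.2 H.hW) (iUnion₂_subset fun i _ => subset_iUnion G.arc i)

theorem arc_subset_carrier {i : Fin G.n} (hi : i ∈ H.S) : G.arc i ⊆ H.carrier :=
  subset_union_of_subset_right (subset_biUnion_of_mem (u := G.arc) hi) _

variable {H}

theorem mem_W_of_mem_carrier {x : ℝ²} (hx : x ∈ G.V) (hxH : x ∈ H.carrier) : x ∈ H.W := by
  rcases hxH with h | h
  · exact h
  obtain ⟨i, hi, hxi⟩ := mem_iUnion₂.1 h
  rcases eq_or_eq_of_mem_arc hx hxi with rfl | rfl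
  exacts [(H.hends i hi).1, (H.hends i hi).2]

theorem edge_notMem_carrier {i : Fin G.n} (hi : i ∉ H.S) {t : ℝ} (ht : t ∈ Ioo (0 : ℝ) 1) :
    G.edge i t ∉ H.carrier := by
  rintro (h | h)
  · exact G.int_not_vertex i t ht (H.hW h)
  obtain ⟨j, hj, hxj⟩ := mem_iUnion₂.1 h
  exact G.edges_meet_at_ends i j (ne_of_mem_of_not_mem hj hi).symm t ht hxj

end Sub

end Arcs

section EdgeGraph

def edgeGraph (G : FinPlaneGraph) (T : Finset (Fin G.n)) : SimpleGraph ℝ² :=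
  SimpleGraph.fromRel fun x y => ∃ j ∈ T, G.edge j 0 = x ∧ G.edge j 1 = y

variable {G : FinPlaneGraph} {T : Finset (Fin G.n)} {x y : ℝ²}

theorem exists_edge_of_adj (h : (G.edgeGraph T).Adj x y) :
    ∃ j ∈ T, s(G.edge j 0, G.edge j 1) = s(x, y) := by
  obtain ⟨-, ⟨j, hj, rfl, rfl⟩ | ⟨j, hj, rfl, rfl⟩⟩ := (fromRel_adj _ _ _).1 h
  exacts [⟨j, hj, rfl⟩, ⟨j, hj, Sym2.eq_swap⟩]

/-- Chosen through the unordered pair `s(x, y)`, so that it survives reversing a walk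
(`adjEdge_symm`). -/
noncomputable def adjEdge (h : (G.edgeGraph T).Adj x y) : Fin G.n :=
  (exists_edge_of_adj h).choose

theorem adjEdge_mem (h : (G.edgeGraph T).Adj x y) : adjEdge h ∈ T :=
  (exists_edge_of_adj h).choose_spec.1

theorem adjEdge_ends (h : (G.edgeGraph T).Adj x y) :
    s(G.edge (adjEdge h) 0, G.edge (adjEdge h) 1) = s(x, y) :=
  (exists_edge_of_adj h).choose_spec.2

theorem adjEdge_symm (h : (G.edgeGraph T).Adj x y) : adjEdge h.symm = adjEdge h := by
  have key : ∀ {e e' : Sym2 ℝ²}, e = e' → ∀ (p : ∃ j ∈ T, s(G.edge j 0, G.edge j 1) = e)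
      (p' : ∃ j ∈ T, s(G.edge j 0, G.edge j 1) = e'), p.choose = p'.choose := by
    rintro _ _ rfl _ _
    rfl
  exact key Sym2.eq_swap _ _

theorem mem_arc_adjEdge_left (h : (G.edgeGraph T).Adj x y) : x ∈ G.arc (adjEdge h) := by
  rcases Sym2.eq_iff.1 (adjEdge_ends h) with ⟨hx, -⟩ | ⟨-, hx⟩
  exacts [mem_of_eq_of_mem hx.symm (left_mem_arc _), mem_of_eq_of_mem hx.symm (right_mem_arc _)]

theorem mem_arc_adjEdge_right (h : (G.edgeGraph T).Adj x y) : y ∈ G.arc (adjEdge h) :=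
  adjEdge_symm h ▸ mem_arc_adjEdge_left h.symm

theorem mem_V_of_adj (h : (G.edgeGraph T).Adj x y) : x ∈ G.V := by
  rcases Sym2.eq_iff.1 (adjEdge_ends h) with ⟨hx, -⟩ | ⟨-, hx⟩
  exacts [hx ▸ (G.ends _).1, hx ▸ (G.ends _).2]

theorem eq_or_eq_of_mem_arc_adjEdge (h : (G.edgeGraph T).Adj x y) {z : ℝ²} (hz : z ∈ G.V)
    (hzh : z ∈ G.arc (adjEdge h)) : z = x ∨ z = y := by
  rcases Sym2.eq_iff.1 (adjEdge_ends h) with ⟨h0, h1⟩ | ⟨h0, h1⟩ <;>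
    rcases eq_or_eq_of_mem_arc hz hzh with rfl | rfl <;> simp [*]

end EdgeGraph

section Walks

variable {G : FinPlaneGraph} {T : Finset (Fin G.n)} {a b z : ℝ²}

noncomputable def walkEdges : {a b : ℝ²} → (G.edgeGraph T).Walk a b → Finset (Fin G.n)
  | _, _, .nil => ∅
  | _, _, .cons h p => insert (adjEdge h) (walkEdges p)

def walkArcs (q : (G.edgeGraph T).Walk a b) : Set ℝ² := ⋃ j ∈ walkEdges q, G.arc j

@[simp]
theorem walkEdges_nil : walkEdges (.nil : (G.edgeGraph T).Walk a a) = ∅ := rfl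

@[simp]
theorem walkEdges_cons {y : ℝ²} (h : (G.edgeGraph T).Adj a y) (p : (G.edgeGraph T).Walk y b) :
    walkEdges (.cons h p) = insert (adjEdge h) (walkEdges p) := rfl

theorem walkEdges_append {c : ℝ²} (p : (G.edgeGraph T).Walk a b)
    (q : (G.edgeGraph T).Walk b c) : walkEdges (p.append q) = walkEdges p ∪ walkEdges q := by
  induction p with
  | nil => simp
  | cons h p ih => simp [ih, Finset.insert_union]

theorem walkEdges_reverse (q : (G.edgeGraph T).Walk a b) :
    walkEdges q.reverse = walkEdges q := by
  induction q with
  | nil => rfl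
  | cons h p ih =>
    rw [Walk.reverse_cons, walkEdges_append, ih, walkEdges_cons, walkEdges_cons, adjEdge_symm,
      walkEdges_nil, insert_empty_eq, Finset.union_singleton]

theorem walkEdges_subset (q : (G.edgeGraph T).Walk a b) : walkEdges q ⊆ T := by
  induction q with
  | nil => simp
  | cons h p ih => exact Finset.insert_subset (adjEdge_mem h) ih

theorem walkEdges_nonempty (q : (G.edgeGraph T).Walk a b) (hab : a ≠ b) :
    (walkEdges q).Nonempty := by
  cases q with
  | nil => exact absurd rfl hab
  | cons h p => exact Finset.insert_nonempty _ _

theorem ends_mem_support_of_mem_walkEdges (q : (G.edgeGraph T).Walk a b) {j : Fin G.n}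
    (hj : j ∈ walkEdges q) : G.edge j 0 ∈ q.support ∧ G.edge j 1 ∈ q.support := by
  induction q with
  | nil => simp at hj
  | cons h p ih =>
    rw [walkEdges_cons, Finset.mem_insert] at hj
    rw [Walk.support_cons, List.mem_cons, List.mem_cons]
    rcases hj with rfl | hj
    · rcases Sym2.eq_iff.1 (adjEdge_ends h) with ⟨h0, h1⟩ | ⟨h0, h1⟩ <;> rw [h0, h1] <;>
        simp [p.start_mem_support]
    · exact (ih hj).imp .inr .inr

theorem mem_V_of_mem_support (q : (G.edgeGraph T).Walk a b) (ha : a ∈ G.V)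
    (hz : z ∈ q.support) : z ∈ G.V := by
  induction q with
  | nil => simp_all
  | cons h p ih =>
    rcases List.mem_cons.1 (Walk.support_cons h p ▸ hz) with rfl | hzp
    exacts [ha, ih (mem_V_of_adj h.symm) hzp]

@[simp]
theorem walkArcs_nil : walkArcs (.nil : (G.edgeGraph T).Walk a a) = ∅ := by
  simp [walkArcs]

@[simp]
theorem walkArcs_cons {y : ℝ²} (h : (G.edgeGraph T).Adj a y) (p : (G.edgeGraph T).Walk y b) :
    walkArcs (.cons h p) = G.arc (adjEdge h) ∪ walkArcs p := by
  simp [walkArcs]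

theorem walkArcs_append {c : ℝ²} (p : (G.edgeGraph T).Walk a b)
    (q : (G.edgeGraph T).Walk b c) : walkArcs (p.append q) = walkArcs p ∪ walkArcs q := by
  rw [walkArcs, walkEdges_append, Finset.set_biUnion_union]
  rfl

theorem walkArcs_reverse (q : (G.edgeGraph T).Walk a b) : walkArcs q.reverse = walkArcs q := by
  rw [walkArcs, walkEdges_reverse, walkArcs]

theorem mem_support_of_mem_walkArcs (q : (G.edgeGraph T).Walk a b) (hz : z ∈ G.V)
    (hzq : z ∈ walkArcs q) : z ∈ q.support := by
  induction q with
  | nil => simp at hzq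
  | cons h p ih =>
    rw [walkArcs_cons] at hzq
    rw [Walk.support_cons, List.mem_cons]
    rcases hzq with hzh | hzp
    · rcases eq_or_eq_of_mem_arc_adjEdge h hz hzh with rfl | rfl
      exacts [.inl rfl, .inr p.start_mem_support]
    · exact .inr (ih hzp)

theorem mem_insert_walkArcs_of_mem_support (q : (G.edgeGraph T).Walk a b)
    (hz : z ∈ q.support) : z ∈ insert a (walkArcs q) := by
  induction q with
  | nil => simp_all
  | cons h p ih =>
    rcases List.mem_cons.1 (Walk.support_cons h p ▸ hz) with rfl | hzp
    · exact mem_insert _ _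
    rw [walkArcs_cons]
    rcases ih hzp with rfl | hzp
    exacts [.inr (.inl (mem_arc_adjEdge_right h)), .inr (.inr hzp)]

theorem start_mem_walkArcs (q : (G.edgeGraph T).Walk a b) (hab : a ≠ b) : a ∈ walkArcs q := by
  cases q with
  | nil => exact absurd rfl hab
  | cons h p => exact walkArcs_cons h p ▸ .inl (mem_arc_adjEdge_left h)

theorem mem_walkArcs_of_mem_support (q : (G.edgeGraph T).Walk a b) (hab : a ≠ b)
    (hz : z ∈ q.support) : z ∈ walkArcs q :=
  insert_eq_of_mem (start_mem_walkArcs q hab) ▸ mem_insert_walkArcs_of_mem_support q hz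

theorem isPreconnected_insert_walkArcs (q : (G.edgeGraph T).Walk a b) :
    IsPreconnected (insert a (walkArcs q)) := by
  induction q with
  | nil => simpa using isPreconnected_singleton
  | cons h p ih =>
    have := (isPreconnected_arc _).union _ (mem_arc_adjEdge_right h) (mem_insert _ _) ih
    rw [walkArcs_cons, insert_eq_of_mem (mem_union_left _ (mem_arc_adjEdge_left h))]
    rwa [union_insert, insert_eq_of_mem (mem_union_left _ (mem_arc_adjEdge_right h))] at this

theorem isPreconnected_walkArcs (q : (G.edgeGraph T).Walk a b) :
    IsPreconnected (walkArcs q) := by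
  cases q with
  | nil => simpa using isPreconnected_empty
  | cons h p =>
    have := isPreconnected_insert_walkArcs (.cons h p)
    rwa [insert_eq_of_mem (walkArcs_cons h p ▸ .inl (mem_arc_adjEdge_left h))] at this

theorem isPreconnected_walkArcs_sdiff_start {q : (G.edgeGraph T).Walk a b} (hq : q.IsPath) :
    IsPreconnected (walkArcs q \ {a}) := by
  cases q with
  | nil => simpa using isPreconnected_empty
  | @cons _ y _ h p =>
    have ha : a ∉ walkArcs p := fun ha =>
      ((Walk.cons_isPath_iff h p).1 hq).2 (mem_support_of_mem_walkArcs p (mem_V_of_adj h) ha)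
    have hy : y ∈ G.arc (adjEdge h) \ {a} := ⟨mem_arc_adjEdge_right h, h.ne.symm⟩
    have := (isPreconnected_arc_sdiff (mem_V_of_adj h) _).union _ hy (mem_insert _ _)
      (isPreconnected_insert_walkArcs p)
    rw [walkArcs_cons, union_sdiff_distrib, sdiff_singleton_eq_self ha]
    rwa [union_insert, insert_eq_of_mem (mem_union_left _ hy)] at this

theorem isPreconnected_walkArcs_sdiff_end {q : (G.edgeGraph T).Walk a b} (hq : q.IsPath) :
    IsPreconnected (walkArcs q \ {b}) :=
  walkArcs_reverse q ▸ isPreconnected_walkArcs_sdiff_start hq.reverse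

end Walks

namespace Sub

variable {G : FinPlaneGraph} {T : Finset (Fin G.n)} {c d : ℝ²}

open Classical in
noncomputable def addWalk (H : G.Sub) (q : (G.edgeGraph T).Walk c d) (hc : c ∈ H.W) :
    G.Sub where
  W := H.W ∪ q.support.toFinset
  S := H.S ∪ walkEdges q
  hW := Finset.union_subset H.hW fun _ hz =>
    mem_V_of_mem_support q (H.hW hc) (List.mem_toFinset.1 hz)
  hends i hi := by
    rcases Finset.mem_union.1 hi with hi | hi
    · exact (H.hends i hi).imp (Finset.mem_union_left _) (Finset.mem_union_left _)
    · exact (ends_mem_support_of_mem_walkEdges q hi).imp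
        (fun h => Finset.mem_union_right _ (List.mem_toFinset.2 h))
        (fun h => Finset.mem_union_right _ (List.mem_toFinset.2 h))

variable {H : G.Sub} {q : (G.edgeGraph T).Walk c d} {hc : c ∈ H.W}

theorem carrier_addWalk (hcd : c ≠ d) : (H.addWalk q hc).carrier = H.carrier ∪ walkArcs q := by
  have hsupp : ↑q.support.toFinset ⊆ walkArcs q := fun z hz =>
    mem_walkArcs_of_mem_support q hcd (List.mem_toFinset.1 hz)
  simp only [carrier_eq, addWalk, Finset.coe_union, Finset.set_biUnion_union]
  rw [union_union_union_comm, ← walkArcs, union_eq_right.2 hsupp]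

theorem twoConnected_addWalk (hH : H.TwoConnected) (hd : d ∈ H.W) (hcd : c ≠ d)
    (hq : q.IsPath) (hint : ∀ z ∈ q.support, z ∈ H.W → z = c ∨ z = d) :
    (H.addWalk q hc).TwoConnected := by
  have hcH : c ∈ H.carrier := .inl hc
  have hdH : d ∈ H.carrier := .inl hd
  have hcq : c ∈ walkArcs q := start_mem_walkArcs q hcd
  have hdq : d ∈ walkArcs q := mem_walkArcs_of_mem_support q hcd q.end_mem_support
  rw [TwoConnected, carrier_addWalk hcd]
  refine ⟨hH.1.union_of_isPreconnected (isPreconnected_walkArcs q) hdH hdq, fun v hv => ?_⟩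
  rw [union_sdiff_distrib]
  by_cases hvq : v ∉ q.support
  · have hvW : v ∈ H.W := by simpa [addWalk, hvq] using hv
    rw [sdiff_singleton_eq_self fun h => hvq (mem_support_of_mem_walkArcs q (H.hW hvW) h)]
    exact (hH.2 v hvW).union_of_isPreconnected (isPreconnected_walkArcs q)
      ⟨hdH, ne_of_mem_of_not_mem q.end_mem_support hvq⟩ hdq
  push Not at hvq
  rcases eq_or_ne v c with rfl | hvc
  · exact (hH.2 v hc).union_of_isPreconnected (isPreconnected_walkArcs_sdiff_start hq)
      ⟨hdH, hcd.symm⟩ ⟨hdq, hcd.symm⟩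
  rcases eq_or_ne v d with rfl | hvd
  · exact (hH.2 v hd).union_of_isPreconnected (isPreconnected_walkArcs_sdiff_end hq)
      ⟨hcH, hcd⟩ ⟨hcq, hcd⟩
  -- An inner vertex `v` splits the path into two pieces, each attached to `H`.
  have hvH : v ∉ H.carrier := fun h =>
    (hint v hvq (mem_W_of_mem_carrier (mem_V_of_mem_support q (H.hW hc) hvq) h)).elim hvc hvd
  rw [sdiff_singleton_eq_self hvH, ← q.take_spec hvq, walkArcs_append, union_sdiff_distrib,
    ← union_assoc]
  refine (hH.1.union_of_isPreconnected (isPreconnected_walkArcs_sdiff_end (hq.takeUntil hvq))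
    hcH ⟨start_mem_walkArcs _ hvc.symm, hvc.symm⟩).union_of_isPreconnected
    (isPreconnected_walkArcs_sdiff_start (hq.dropUntil hvq)) (.inl hdH)
    ⟨mem_walkArcs_of_mem_support _ hvd (Walk.end_mem_support _), hvd.symm⟩

theorem IsBlock.walkEdges_subset (hH : H.IsBlock) (hc : c ∈ H.W) (hd : d ∈ H.W) (hcd : c ≠ d)
    (hq : q.IsPath) (hint : ∀ z ∈ q.support, z ∈ H.W → z = c ∨ z = d) : walkEdges q ⊆ H.S := by
  have hmax := hH.2 (H.addWalk q hc) (twoConnected_addWalk hH.1 hd hcd hq hint)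
    Finset.subset_union_left Finset.subset_union_left
  exact hmax.2 ▸ Finset.subset_union_right

end Sub

section InnerEdges

variable {G : FinPlaneGraph} {H : G.Sub} {f : Set ℝ²}

open Classical in
noncomputable def innerEdges (G : FinPlaneGraph) (f : Set ℝ²) : Finset (Fin G.n) :=
  Finset.univ.filter fun i => (G.arc i ∩ f).Nonempty

theorem mem_innerEdges {i : Fin G.n} : i ∈ G.innerEdges f ↔ (G.arc i ∩ f).Nonempty := by
  simp [innerEdges]

theorem notMem_S_of_mem_innerEdges (hf : IsInnerFace H.carrier f) {i : Fin G.n}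
    (hi : i ∈ G.innerEdges f) : i ∉ H.S := fun hiS =>
  let ⟨_, hzi, hzf⟩ := mem_innerEdges.1 hi
  hf.subset_compl hzf (H.arc_subset_carrier hiS hzi)

/-- The interior of the edge avoids `H` and is connected. -/
theorem interior_subset_of_mem_innerEdges (hf : IsInnerFace H.carrier f) {i : Fin G.n}
    (hi : i ∈ G.innerEdges f) : G.edge i '' Ioo 0 1 ⊆ f := by
  obtain ⟨z, hzi, hzf⟩ := mem_innerEdges.1 hi
  obtain ⟨_, hwf, t, ht, rfl⟩ := mem_closure_iff.1 (arc_subset_closure_interior i hzi) f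
    (hf.isOpen H.isClosed_carrier) hzf
  have hsub : G.edge i '' Ioo 0 1 ⊆ H.carrierᶜ := by
    rintro _ ⟨s, hs, rfl⟩
    exact Sub.edge_notMem_carrier (notMem_S_of_mem_innerEdges hf hi) hs
  have := (isPreconnected_Ioo.image _ ((G.cont i).mono Ioo_subset_Icc_self))
    |>.subset_connectedComponentIn (mem_image_of_mem _ ht) hsub
  rwa [hf.connectedComponentIn_eq hwf] at this

theorem arc_subset_closure_of_mem_innerEdges (hf : IsInnerFace H.carrier f) {i : Fin G.n}
    (hi : i ∈ G.innerEdges f) : G.arc i ⊆ closure f :=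
  (arc_subset_closure_interior i).trans (closure_mono (interior_subset_of_mem_innerEdges hf hi))

end InnerEdges

section Component

variable {G : FinPlaneGraph} {T : Finset (Fin G.n)} {v x : ℝ²}

def componentEdges (G : FinPlaneGraph) (T : Finset (Fin G.n)) (v : ℝ²) : Set (Fin G.n) :=
  {j | j ∈ T ∧ (G.edgeGraph T).Reachable v (G.edge j 0)}

def componentCarrier (G : FinPlaneGraph) (T : Finset (Fin G.n)) (v : ℝ²) : Set ℝ² :=
  insert v (⋃ j ∈ G.componentEdges T v, G.arc j)

def restCarrier (G : FinPlaneGraph) (T : Finset (Fin G.n)) (v : ℝ²) : Set ℝ² :=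
  (⋃ j ∈ (G.componentEdges T v)ᶜ, G.arc j) ∪ (↑G.V \ G.componentCarrier T v)

theorem isClosed_componentCarrier : IsClosed (G.componentCarrier T v) := by
  rw [componentCarrier, insert_eq]
  exact isClosed_singleton.union
    ((Set.toFinite _).isClosed_biUnion fun j _ => (isCompact_arc j).isClosed)

theorem isClosed_restCarrier : IsClosed (G.restCarrier T v) :=
  ((Set.toFinite _).isClosed_biUnion fun j _ => (isCompact_arc j).isClosed).union
    (G.V.finite_toSet.sdiff).isClosed

theorem componentCarrier_union_restCarrier (hv : v ∈ G.V) :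
    G.componentCarrier T v ∪ G.restCarrier T v = G.carrier := by
  apply subset_antisymm
  · refine union_subset (insert_subset (.inl hv) (iUnion₂_subset fun j _ => arc_subset_carrier j))
      (union_subset (iUnion₂_subset fun j _ => arc_subset_carrier j) fun x hx => .inl hx.1)
  · rintro x (hxV | hx)
    · by_cases hxK : x ∈ G.componentCarrier T v
      exacts [.inl hxK, .inr (.inr ⟨hxV, hxK⟩)]
    · obtain ⟨j, hxj⟩ := mem_iUnion.1 hx
      by_cases hj : j ∈ G.componentEdges T v
      exacts [.inl (.inr (mem_iUnion₂.2 ⟨j, hj, hxj⟩)), .inr (.inl (mem_iUnion₂.2 ⟨j, hj, hxj⟩))]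

theorem reachable_edge_iff {j : Fin G.n} (hj : j ∈ T) (hx : x = G.edge j 0 ∨ x = G.edge j 1) :
    (G.edgeGraph T).Reachable v x ↔ (G.edgeGraph T).Reachable v (G.edge j 0) := by
  rcases hx with rfl | rfl
  · rfl
  by_cases he : G.edge j 0 = G.edge j 1
  · rw [he]
  have hadj : (G.edgeGraph T).Adj (G.edge j 0) (G.edge j 1) :=
    (fromRel_adj _ _ _).2 ⟨he, .inl ⟨j, hj, rfl, rfl⟩⟩
  exact ⟨fun h => h.trans hadj.reachable.symm, fun h => h.trans hadj.reachable⟩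

theorem reachable_of_mem_componentCarrier (hx : x ∈ G.V) (hxK : x ∈ G.componentCarrier T v) :
    (G.edgeGraph T).Reachable v x := by
  rcases hxK with rfl | hxK
  · rfl
  obtain ⟨j, ⟨hjT, hj⟩, hxj⟩ := mem_iUnion₂.1 hxK
  exact (reachable_edge_iff hjT (eq_or_eq_of_mem_arc hx hxj)).2 hj

theorem mem_W_of_mem_componentCarrier {H : G.Sub} (hT : ∀ j ∈ T, j ∉ H.S) (hv : v ∈ G.V)
    (hxK : x ∈ G.componentCarrier T v) (hxH : x ∈ H.carrier) :
    x ∈ H.W ∧ (G.edgeGraph T).Reachable v x := by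
  have hxV : x ∈ G.V := by
    rcases hxK with rfl | hxK
    · exact hv
    obtain ⟨j, ⟨hjT, -⟩, hxj⟩ := mem_iUnion₂.1 hxK
    rw [arc_eq] at hxj
    rcases hxj with rfl | rfl | ⟨t, ht, rfl⟩
    exacts [(G.ends j).1, (G.ends j).2, absurd hxH (Sub.edge_notMem_carrier (hT j hjT) ht)]
  exact ⟨Sub.mem_W_of_mem_carrier hxV hxH, reachable_of_mem_componentCarrier hxV hxK⟩

end Component

section Face

variable {G : FinPlaneGraph} {H : G.Sub} {f : Set ℝ²} {v : ℝ²}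

theorem componentCarrier_subset_closure (hf : IsInnerFace H.carrier f) (hvf : v ∈ closure f) :
    G.componentCarrier (G.innerEdges f) v ⊆ closure f :=
  insert_subset hvf (iUnion₂_subset fun _ hj => arc_subset_closure_of_mem_innerEdges hf hj.1)

/-- A common point off `H` would lie in `f`, so the edge of the rest through it would meet `f`
and be reachable from `v`. -/
theorem componentCarrier_inter_restCarrier_subset (hf : IsInnerFace H.carrier f) (hv : v ∈ G.V)
    (hvf : v ∈ closure f) :
    G.componentCarrier (G.innerEdges f) v ∩ G.restCarrier (G.innerEdges f) v ⊆ H.carrier := by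
  rintro x ⟨hxK, hxL | hxL⟩
  swap
  · exact absurd hxK hxL.2
  by_contra hxH
  have hxf : x ∈ f := (hf.closure_subset H.isClosed_carrier
    (componentCarrier_subset_closure hf hvf hxK)).resolve_right hxH
  obtain ⟨j, hj, hxj⟩ := mem_iUnion₂.1 hxL
  have hxV : x ∈ G.V := by
    rcases hxK with rfl | hxK
    · exact hv
    obtain ⟨i, hi, hxi⟩ := mem_iUnion₂.1 hxK
    exact mem_V_of_mem_arc_of_mem_arc (ne_of_mem_of_not_mem hi hj) hxi hxj
  have hjT : j ∈ G.innerEdges f := mem_innerEdges.2 ⟨x, hxj, hxf⟩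
  exact hj ⟨hjT, (reachable_edge_iff hjT (eq_or_eq_of_mem_arc hxV hxj)).1
    (reachable_of_mem_componentCarrier hxV hxK)⟩

theorem exists_vertex_componentCarrier_inter (hf : IsInnerFace H.carrier f) {p : ℝ²}
    (hp : p ∈ f) (hpG : p ∈ G.carrier) :
    ∃ v ∈ G.V, v ∈ closure f ∧ (G.componentCarrier (G.innerEdges f) v ∩ f).Nonempty := by
  rcases hpG with hpV | hp'
  · exact ⟨p, hpV, subset_closure hp, p, mem_insert _ _, hp⟩
  obtain ⟨i, hpi⟩ := mem_iUnion.1 hp'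
  have hi : i ∈ G.innerEdges f := mem_innerEdges.2 ⟨p, hpi, hp⟩
  exact ⟨G.edge i 0, (G.ends i).1, arc_subset_closure_of_mem_innerEdges hf hi (left_mem_arc i),
    p, .inr (mem_iUnion₂.2 ⟨i, ⟨hi, .rfl⟩, hpi⟩), hp⟩

/-- Each face of `G` inside `f` is bounded by a simple closed curve, hence by `K` alone or by `L`
alone, as these meet in at most one point; but `f` meets `K`, and its frontier, having at least two
points, reaches `L \ K`. -/
theorem not_subsingleton_componentCarrier_inter_carrier
    (hfaces : ∀ g : Set ℝ², IsInnerFace G.carrier g → Nonempty (frontier g ≃ₜ sphere (0 : ℝ²) 1))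
    (hf : IsInnerFace H.carrier f) (hv : v ∈ G.V) (hvf : v ∈ closure f)
    (hKf : (G.componentCarrier (G.innerEdges f) v ∩ f).Nonempty) :
    ¬ (G.componentCarrier (G.innerEdges f) v ∩ H.carrier).Subsingleton := by
  intro hA
  set K := G.componentCarrier (G.innerEdges f) v
  set L := G.restCarrier (G.innerEdges f) v
  have hKL : K ∪ L = G.carrier := componentCarrier_union_restCarrier hv
  have hKLH : K ∩ L ⊆ H.carrier := componentCarrier_inter_restCarrier_subset hf hv hvf
  have hface : ∀ y ∈ f, y ∉ K ∪ L → frontier (connectedComponentIn (K ∪ L)ᶜ y) ⊆ K ∨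
      frontier (connectedComponentIn (K ∪ L)ᶜ y) ⊆ L := by
    intro y hyf hy
    rw [hKL] at hy ⊢
    obtain ⟨e⟩ := hfaces _ (hf.isInnerFace_connectedComponentIn H.carrier_subset hyf hy)
    refine subset_or_subset_of_homeomorph_sphere one_lt_rank_plane e isClosed_componentCarrier
      isClosed_restCarrier ?_ (hA.anti fun x hx => ⟨hx.1, hKLH hx⟩)
    simpa [hKL] using frontier_connectedComponentIn_subset G.isClosed_carrier.isOpen_compl y
  obtain ⟨z, hzf, hzA⟩ : ∃ z ∈ frontier f, z ∉ K ∩ H.carrier := by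
    by_contra! h
    exact not_subsingleton_frontier one_lt_rank_plane (hf.isOpen H.isClosed_carrier)
      hf.isConnected.nonempty hf.2 (hA.anti h)
  have hzH : z ∈ H.carrier := hf.frontier_subset H.isClosed_carrier hzf
  have hzK : z ∉ K := fun h => hzA ⟨h, hzH⟩
  have hzL : z ∈ L := (hKL.symm ▸ H.carrier_subset hzH : z ∈ K ∪ L).resolve_left hzK
  have hdisj := disjoint_closure_sdiff_of_frontier_subset hf.isConnected.isPreconnected
    isClosed_componentCarrier isClosed_restCarrier
    ((disjoint_compl_right.mono_left hKLH).symm.mono_left hf.subset_compl).symm hface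
    (inter_comm K f ▸ hKf)
  exact hdisj.ne_of_mem (frontier_subset_closure hzf) ⟨hzL, hzK⟩ rfl

theorem disjoint_carrier_of_isInnerFace
    (hfaces : ∀ g : Set ℝ², IsInnerFace G.carrier g → Nonempty (frontier g ≃ₜ sphere (0 : ℝ²) 1))
    (hH : H.IsBlock) (hf : IsInnerFace H.carrier f) : Disjoint f G.carrier := by
  rw [Set.disjoint_left]
  intro p hp hpG
  obtain ⟨v, hv, hvf, hKf⟩ := exists_vertex_componentCarrier_inter hf hp hpG
  refine not_subsingleton_componentCarrier_inter_carrier hfaces hf hv hvf hKf fun x hx y hy => ?_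
  by_contra hxy
  have hT : ∀ j ∈ G.innerEdges f, j ∉ H.S := fun j hj => notMem_S_of_mem_innerEdges hf hj
  obtain ⟨hxW, hvx⟩ := mem_W_of_mem_componentCarrier hT hv hx.1 hx.2
  obtain ⟨hyW, hvy⟩ := mem_W_of_mem_componentCarrier hT hv hy.1 hy.2
  obtain ⟨c, hc, d, hd, hcd, q, hq, hint⟩ :=
    exists_isPath_of_reachable (W := ↑H.W) hxW hyW hxy (hvx.symm.trans hvy)
  obtain ⟨j, hj⟩ := walkEdges_nonempty q hcd
  exact hT j (walkEdges_subset q hj) (hH.walkEdges_subset hc hd hcd hq hint hj)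

end Face

end FinPlaneGraph

/-- If every inner face of a finite plane graph `G` is
bounded by a simple closed curve, then every inner face of a block `H` of `G`
is an inner face of `G`. -/
theorem stmt_19 (G : FinPlaneGraph)
    (hfaces : ∀ f : Set (EuclideanSpace ℝ (Fin 2)), IsInnerFace G.carrier f →
      Nonempty (↥(frontier f) ≃ₜ
        ↥(Metric.sphere (0 : EuclideanSpace ℝ (Fin 2)) 1)))
    (H : G.Sub) (hH : H.IsBlock) :
    ∀ f : Set (EuclideanSpace ℝ (Fin 2)),
      IsInnerFace H.carrier f → IsInnerFace G.carrier f :=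
  fun _ hf => hf.mono H.carrier_subset (FinPlaneGraph.disjoint_carrier_of_isInnerFace hfaces hH hf)
end
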